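/- arXiv:2410.11003 — 5 statements merged into one kernel-verified Lean document; each statement's English description precedes it below -/
import Mathlib

section
/- For every integer ℓ > 0 there exist constants L > 0 and n₀ > 0 such that for every n ≥ n₀ and every k with (log n)² ≤ k < n/3 there exists a bipartite n-vertex graph H with minimum degree δ(H) ≥ k such that |Emb(F,H)| ≤ L·n^{v(F)}·(k/n)^{e(F)} for every graph F with at most ℓ vertices. -/
open Finset
open scoped Classical

/-- The degree of a vertex (number of neighbours). -/
noncomputable def degR {V : Type*} (G : SimpleGraph V) (v : V) : ℕ :=
  Nat.card (G.neighborSet v)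

/-- The number of edges of a graph on `Fin n`. -/
noncomputable def edgeCount {n : ℕ} (H : SimpleGraph (Fin n)) : ℕ := Nat.card H.edgeSet

/-- The probability that the binomial random graph `G_{n,p}` satisfies the property `P`. -/
noncomputable def Pr (n : ℕ) (p : ℝ) (P : SimpleGraph (Fin n) → Prop) : ℝ :=
  ∑ H : SimpleGraph (Fin n),
    if P H then p ^ edgeCount H * (1 - p) ^ (n.choose 2 - edgeCount H) else 0

/-- `G` has a `K_r`-factor: a partition of the vertex set into `r`-cliques. -/
def HasCliqueFactor {n : ℕ} (G : SimpleGraph (Fin n)) (r : ℕ) : Prop :=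
  ∃ P : Finpartition (Finset.univ : Finset (Fin n)), ∀ c ∈ P.parts, G.IsNClique r c

/-- The threshold function `p_s(n)`: `log n / n` if `s = 2` and `n^{-φ(s)}` with
`φ(s) = 2s/((s-1)(s+2))` if `s ≥ 3`. -/
noncomputable def pThr (s n : ℕ) : ℝ :=
  if s = 2 then Real.log n / n
  else (n : ℝ) ^ (-(2 * (s : ℝ)) / (((s : ℝ) - 1) * ((s : ℝ) + 2)))

/-- The number of edges of `G` within the vertex set `S`. -/
noncomputable def edgesIn {V : Type*} (G : SimpleGraph V) (S : Set V) : ℕ :=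
  Nat.card {e : Sym2 V // e ∈ G.edgeSet ∧ ∀ v ∈ e, v ∈ S}

/-- The number of ordered adjacent pairs between `S` and `T`. -/
noncomputable def edgesBtw {V : Type*} (G : SimpleGraph V) (S T : Set V) : ℕ :=
  Nat.card {p : V × V // p.1 ∈ S ∧ p.2 ∈ T ∧ G.Adj p.1 p.2}

/-- The edge density of the pair `(S, T)` in `G`. -/
noncomputable def density {V : Type*} (G : SimpleGraph V) (S T : Set V) : ℝ :=
  (edgesBtw G S T : ℝ) / ((S.ncard : ℝ) * (T.ncard : ℝ))

/-- The pair `(S, T)` is `(ε, d)`-regular in `G`. -/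
def IsRegularPair {V : Type*} (G : SimpleGraph V) (S T : Set V) (ε d : ℝ) : Prop :=
  ∀ X ⊆ S, ∀ Y ⊆ T, ε * S.ncard ≤ (X.ncard : ℝ) → ε * T.ncard ≤ (Y.ncard : ℝ) →
    |density G X Y - d| < ε

/-- The pair `(S, T)` is `(ε, d, ϑ)`-super-regular in `G`. -/
def IsSuperRegularPair {V : Type*} (G : SimpleGraph V) (S T : Set V) (ε d ϑ : ℝ) : Prop :=
  IsRegularPair G S T ε d ∧
  (∀ v ∈ S, ϑ * T.ncard ≤ ((T ∩ G.neighborSet v).ncard : ℝ)) ∧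
  (∀ v ∈ T, ϑ * S.ncard ≤ ((S ∩ G.neighborSet v).ncard : ℝ))

namespace Stmt3

variable {n : ℕ}

noncomputable def wt (p : ℝ) (ω : Sym2 (Fin n) → Bool) : ℝ :=
  ∏ e : Sym2 (Fin n), (if ω e then p else 1 - p)

lemma wt_nonneg {p : ℝ} (hp0 : 0 ≤ p) (hp1 : p ≤ 1) (ω : Sym2 (Fin n) → Bool) :
    0 ≤ wt p ω := by
  refine Finset.prod_nonneg fun e _ => ?_
  split <;> linarith

lemma master (p : ℝ) (S T : Finset (Sym2 (Fin n))) (hST : Disjoint S T) :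
    ∑ ω : Sym2 (Fin n) → Bool,
      wt p ω * (if (∀ e ∈ S, ω e = true) ∧ (∀ e ∈ T, ω e = false) then (1:ℝ) else 0)
    = p ^ S.card * (1 - p) ^ T.card := by
  classical
  set g : Sym2 (Fin n) → Bool → ℝ := fun e b =>
    (if b then p else 1 - p) *
      (if e ∈ S then (if b then 1 else 0) else if e ∈ T then (if b then 0 else 1) else 1) with hg
  have hpt : ∀ ω : Sym2 (Fin n) → Bool,
      wt p ω * (if (∀ e ∈ S, ω e = true) ∧ (∀ e ∈ T, ω e = false) then (1:ℝ) else 0)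
        = ∏ e, g e (ω e) := by
    intro ω
    have : (∏ e, g e (ω e)) = wt p ω * ∏ e : Sym2 (Fin n),
        (if e ∈ S then (if ω e then (1:ℝ) else 0) else if e ∈ T then (if ω e then 0 else 1) else 1) := by
      rw [wt, ← Finset.prod_mul_distrib]
    rw [this]
    congr 1
    by_cases h : (∀ e ∈ S, ω e = true) ∧ (∀ e ∈ T, ω e = false)
    · rw [if_pos h]
      refine (Finset.prod_eq_one fun e _ => ?_).symm
      by_cases heS : e ∈ S
      · simp [heS, h.1 e heS]
      · by_cases heT : e ∈ T
        · simp [heS, heT, h.2 e heT]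
        · simp [heS, heT]
    · rw [if_neg h]
      push_neg at h
      by_cases h1 : ∀ e ∈ S, ω e = true
      · obtain ⟨e, heT, he⟩ := h h1
        refine (Finset.prod_eq_zero (Finset.mem_univ e) ?_).symm
        have heS : e ∉ S := fun heS => (Finset.disjoint_left.1 hST heS) heT
        have : ω e = true := by simpa using he
        simp [heS, heT, this]
      · push_neg at h1
        obtain ⟨e, heS, he⟩ := h1
        refine (Finset.prod_eq_zero (Finset.mem_univ e) ?_).symm
        have : ω e = false := by simpa using he
        simp [heS, this]
  calc ∑ ω : Sym2 (Fin n) → Bool,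
        wt p ω * (if (∀ e ∈ S, ω e = true) ∧ (∀ e ∈ T, ω e = false) then (1:ℝ) else 0)
      = ∑ ω : Sym2 (Fin n) → Bool, ∏ e, g e (ω e) := Finset.sum_congr rfl fun ω _ => hpt ω
    _ = ∏ e : Sym2 (Fin n), ∑ b : Bool, g e b := by
        rw [Finset.prod_univ_sum (fun _ => (Finset.univ : Finset Bool)) g]
        rw [Fintype.piFinset_univ]
    _ = ∏ e : Sym2 (Fin n), (if e ∈ S then p else if e ∈ T then 1 - p else 1) := by
        refine Finset.prod_congr rfl fun e _ => ?_
        rw [Fintype.sum_bool]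
        by_cases heS : e ∈ S
        · simp [hg, heS]
        · by_cases heT : e ∈ T <;> simp [hg, heS, heT]
    _ = p ^ S.card * (1 - p) ^ T.card := by
        have hTsub : T ⊆ Finset.univ \ S := by
          intro e he
          simp [Finset.disjoint_right.1 hST he]
        rw [← Finset.prod_sdiff (Finset.subset_univ S)]
        have h1 : ∏ e ∈ S, (if e ∈ S then p else if e ∈ T then 1 - p else 1) = p ^ S.card := by
          rw [Finset.prod_congr rfl fun e he => if_pos he, Finset.prod_const]
        have h2 : ∏ e ∈ Finset.univ \ S, (if e ∈ S then p else if e ∈ T then 1 - p else 1)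
            = (1 - p) ^ T.card := by
          rw [← Finset.prod_sdiff hTsub]
          have h3 : ∏ e ∈ T, (if e ∈ S then p else if e ∈ T then 1 - p else 1) = (1 - p) ^ T.card := by
            rw [Finset.prod_congr rfl fun e he => ?_, Finset.prod_const]
            rw [if_neg (Finset.disjoint_right.1 hST he), if_pos he]
          rw [h3]
          have h4 : ∏ e ∈ (Finset.univ \ S) \ T, (if e ∈ S then p else if e ∈ T then 1 - p else 1) = 1 := by
            refine Finset.prod_eq_one fun e he => ?_
            rw [Finset.mem_sdiff, Finset.mem_sdiff] at he
            rw [if_neg he.1.2, if_neg he.2]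
          rw [h4, one_mul]
        rw [h1, h2, mul_comm]
    
lemma wt_total (p : ℝ) : ∑ ω : Sym2 (Fin n) → Bool, wt p ω = 1 := by
  have := master (n := n) p ∅ ∅ (by simp)
  simpa using this


variable {n : ℕ}

noncomputable def sd (n : ℕ) (v : Fin n) : Bool := decide (2 * v.val < n)

noncomputable def gr (n : ℕ) (ω : Sym2 (Fin n) → Bool) : SimpleGraph (Fin n) where
  Adj x y := sd n x ≠ sd n y ∧ ω s(x, y) = true
  symm := by
    refine ⟨?_⟩
    intro x y ⟨h1, h2⟩
    refine ⟨fun h => h1 h.symm, ?_⟩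
    rwa [Sym2.eq_swap]
  loopless := by refine ⟨?_⟩; intro x ⟨h1, _⟩; exact h1 rfl

lemma gr_colorable (ω : Sym2 (Fin n) → Bool) : (gr n ω).Colorable 2 := by
  refine ⟨SimpleGraph.Coloring.mk (fun v => if sd n v then 0 else 1) ?_⟩
  intro v w hvw
  have h1 := hvw.1
  cases hv : sd n v <;> cases hw : sd n w <;> simp_all

/-- cross-neighbour finset -/
noncomputable def crossNbr (n : ℕ) (ω : Sym2 (Fin n) → Bool) (v : Fin n) : Finset (Fin n) :=
  Finset.univ.filter fun u => sd n u ≠ sd n v ∧ ω s(u, v) = true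

lemma crossNbr_card_le_degree (ω : Sym2 (Fin n) → Bool) (v : Fin n) :
    (crossNbr n ω v).card ≤ Nat.card ((gr n ω).neighborSet v) := by
  have h1 : Nat.card ((gr n ω).neighborSet v) = ((gr n ω).neighborSet v).toFinset.card := by
    rw [Nat.card_coe_set_eq, Set.ncard_eq_toFinset_card']
  rw [h1]
  refine Finset.card_le_card ?_
  intro u hu
  rw [crossNbr, Finset.mem_filter] at hu
  rw [Set.mem_toFinset]
  have : (gr n ω).Adj v u := by
    refine ⟨fun h => hu.2.1 h.symm, ?_⟩
    rw [Sym2.eq_swap]; exact hu.2.2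
  exact this

lemma card_sd_true (n : ℕ) : (Finset.univ.filter fun u : Fin n => sd n u = true).card = (n + 1) / 2 := by
  have h1 : (Finset.univ.filter fun u : Fin n => sd n u = true).card
      = ((Finset.range n).filter fun i => 2 * i < n).card := by
    refine Finset.card_bij (fun u _ => u.val) ?_ ?_ ?_
    · intro u hu
      simp only [Finset.mem_filter, Finset.mem_range]
      refine ⟨u.isLt, ?_⟩
      have := (Finset.mem_filter.1 hu).2
      simpa [sd] using this
    · intro a ha b hb h
      exact Fin.val_injective h
    · intro i hi
      simp only [Finset.mem_filter, Finset.mem_range] at hi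
      exact ⟨⟨i, hi.1⟩, by simp [sd, hi.2], rfl⟩
  rw [h1]
  have h2 : ((Finset.range n).filter fun i => 2 * i < n) = Finset.range ((n + 1) / 2) := by
    ext i
    simp only [Finset.mem_filter, Finset.mem_range]
    omega
  rw [h2, Finset.card_range]

lemma card_uv (v : Fin n) :
    (Finset.univ.filter fun u : Fin n => sd n u ≠ sd n v).card
      = if sd n v then n - (n + 1) / 2 else (n + 1) / 2 := by
  cases hv : sd n v with
  | true =>
    simp only [if_true]
    have : (Finset.univ.filter fun u : Fin n => sd n u ≠ true)
        = (Finset.univ.filter fun u : Fin n => sd n u = true)ᶜ := by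
      ext u; simp
    rw [this, Finset.card_compl, card_sd_true]
    simp
  | false =>
    simp only [Bool.false_eq_true, if_false]
    have : (Finset.univ.filter fun u : Fin n => sd n u ≠ false)
        = (Finset.univ.filter fun u : Fin n => sd n u = true) := by
      ext u; simp
    rw [this, card_sd_true]

lemma card_uv_bounds (v : Fin n) :
    n - 1 ≤ 2 * (Finset.univ.filter fun u : Fin n => sd n u ≠ sd n v).card ∧
    2 * (Finset.univ.filter fun u : Fin n => sd n u ≠ sd n v).card ≤ n + 1 := by
  rw [card_uv]
  split <;> omega



/-- Pointwise decomposition of the low-degree indicator into disjoint patterns. -/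
lemma deg_decomp (k : ℕ) (v : Fin n) (ω : Sym2 (Fin n) → Bool) :
    (if (crossNbr n ω v).card < k then (1:ℝ) else 0)
      = ∑ A ∈ ((Finset.univ.filter fun u : Fin n => sd n u ≠ sd n v).powerset.filter
          fun A => A.card < k),
          (if (∀ u ∈ A, ω s(u, v) = true) ∧
              (∀ u ∈ (Finset.univ.filter fun u : Fin n => sd n u ≠ sd n v) \ A, ω s(u, v) = false)
            then (1:ℝ) else 0) := by
  classical
  set Uv := Finset.univ.filter fun u : Fin n => sd n u ≠ sd n v with hUv
  set B := Uv.filter fun u => ω s(u, v) = true with hB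
  have hcross : crossNbr n ω v = B := by
    rw [hB, hUv, crossNbr, Finset.filter_filter]
  have hstep : ∀ A ∈ Uv.powerset.filter (fun A => A.card < k),
      (if (∀ u ∈ A, ω s(u, v) = true) ∧ (∀ u ∈ Uv \ A, ω s(u, v) = false) then (1:ℝ) else 0)
        = (if A = B then (1:ℝ) else 0) := by
    intro A hA
    have hAU : A ⊆ Uv := by
      rw [Finset.mem_filter, Finset.mem_powerset] at hA
      exact hA.1
    refine if_congr ?_ rfl rfl
    constructor
    · rintro ⟨h1, h2⟩
      ext u
      rw [hB, Finset.mem_filter]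
      constructor
      · intro hu; exact ⟨hAU hu, h1 u hu⟩
      · rintro ⟨huU, huω⟩
        by_contra huA
        have : ω s(u, v) = false := h2 u (Finset.mem_sdiff.2 ⟨huU, huA⟩)
        rw [huω] at this
        simp at this
    · rintro rfl
      constructor
      · intro u hu; exact (Finset.mem_filter.1 hu).2
      · intro u hu
        rw [Finset.mem_sdiff] at hu
        have h2 := hu.2
        rw [hB, Finset.mem_filter, not_and] at h2
        have h3 := h2 hu.1
        cases hω : ω s(u, v)
        · rfl
        · exact absurd hω h3
  rw [Finset.sum_congr rfl hstep, Finset.sum_ite_eq' _ B (fun _ => (1:ℝ))]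
  rw [hcross]
  have hmem : B ∈ Uv.powerset.filter (fun A => A.card < k) ↔ B.card < k := by
    simp only [Finset.mem_filter, Finset.mem_powerset]
    exact ⟨fun h => h.2, fun h => ⟨Finset.filter_subset _ _, h⟩⟩
  exact (if_congr hmem rfl rfl).symm

lemma s_inj_on (v : Fin n) {u u' : Fin n} (hu : u ≠ v) (h : s(u, v) = s(u', v)) : u = u' := by
  rcases Sym2.eq_iff.1 h with ⟨h1, _⟩ | ⟨h1, h2⟩
  · exact h1
  · exact absurd h1 hu

lemma pattern_exp (p : ℝ) (v : Fin n) (A : Finset (Fin n))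
    (hA : A ⊆ Finset.univ.filter fun u : Fin n => sd n u ≠ sd n v) :
    ∑ ω : Sym2 (Fin n) → Bool, wt p ω *
        (if (∀ u ∈ A, ω s(u, v) = true) ∧
            (∀ u ∈ (Finset.univ.filter fun u : Fin n => sd n u ≠ sd n v) \ A, ω s(u, v) = false)
          then (1:ℝ) else 0)
      = p ^ A.card * (1 - p) ^
          ((Finset.univ.filter fun u : Fin n => sd n u ≠ sd n v).card - A.card) := by
  classical
  set Uv := Finset.univ.filter fun u : Fin n => sd n u ≠ sd n v with hUv
  have hne : ∀ u ∈ Uv, u ≠ v := by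
    intro u hu h
    have := (Finset.mem_filter.1 hu).2
    subst h
    exact this rfl
  set SA := A.image (fun u => s(u, v)) with hSAdef
  set TA := (Uv \ A).image (fun u => s(u, v)) with hTAdef
  have hSA : SA.card = A.card :=
    Finset.card_image_of_injOn (fun u hu u' hu' h => s_inj_on v (hne u (hA hu)) h)
  have hTA : TA.card = Uv.card - A.card := by
    rw [Finset.card_image_of_injOn
        (fun u hu u' hu' h => s_inj_on v (hne u (Finset.mem_sdiff.1 hu).1) h),
      Finset.card_sdiff_of_subset hA]
  have hST : Disjoint SA TA := by
    rw [Finset.disjoint_left]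
    rintro e heS heT
    obtain ⟨u, hu, rfl⟩ := Finset.mem_image.1 heS
    obtain ⟨u', hu', he⟩ := Finset.mem_image.1 heT
    have heq : u' = u := s_inj_on v (hne u' (Finset.mem_sdiff.1 hu').1) he
    subst heq
    exact (Finset.mem_sdiff.1 hu').2 hu
  have hcond : ∀ ω : Sym2 (Fin n) → Bool,
      ((∀ e ∈ SA, ω e = true) ∧ (∀ e ∈ TA, ω e = false)
        ↔ (∀ u ∈ A, ω s(u, v) = true) ∧ (∀ u ∈ Uv \ A, ω s(u, v) = false)) := by
    intro ω
    constructor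
    · rintro ⟨h1, h2⟩
      exact ⟨fun u hu => h1 _ (Finset.mem_image_of_mem _ hu),
        fun u hu => h2 _ (Finset.mem_image_of_mem _ hu)⟩
    · rintro ⟨h1, h2⟩
      constructor
      · intro e he; obtain ⟨u, hu, rfl⟩ := Finset.mem_image.1 he; exact h1 u hu
      · intro e he; obtain ⟨u, hu, rfl⟩ := Finset.mem_image.1 he; exact h2 u hu
  rw [← hTA, ← hSA, ← master p SA TA hST]
  exact Finset.sum_congr rfl fun ω _ => by rw [if_congr (hcond ω) rfl rfl]

lemma deg_exp (p : ℝ) (k : ℕ) (v : Fin n) :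
    ∑ ω : Sym2 (Fin n) → Bool, wt p ω * (if (crossNbr n ω v).card < k then (1:ℝ) else 0)
      = ∑ A ∈ ((Finset.univ.filter fun u : Fin n => sd n u ≠ sd n v).powerset.filter
            fun A => A.card < k),
          p ^ A.card * (1 - p) ^
            ((Finset.univ.filter fun u : Fin n => sd n u ≠ sd n v).card - A.card) := by
  classical
  have h1 : ∀ ω : Sym2 (Fin n) → Bool,
      wt p ω * (if (crossNbr n ω v).card < k then (1:ℝ) else 0)
        = ∑ A ∈ ((Finset.univ.filter fun u : Fin n => sd n u ≠ sd n v).powerset.filter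
            fun A => A.card < k),
            wt p ω * (if (∀ u ∈ A, ω s(u, v) = true) ∧
              (∀ u ∈ (Finset.univ.filter fun u : Fin n => sd n u ≠ sd n v) \ A, ω s(u, v) = false)
              then (1:ℝ) else 0) := by
    intro ω
    rw [deg_decomp k v ω, Finset.mul_sum]
  rw [Finset.sum_congr rfl fun ω _ => h1 ω, Finset.sum_comm]
  refine Finset.sum_congr rfl fun A hA => ?_
  have hAU : A ⊆ Finset.univ.filter fun u : Fin n => sd n u ≠ sd n v :=
    Finset.mem_powerset.1 (Finset.mem_filter.1 hA).1
  exact pattern_exp p v A hAU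


variable {n : ℕ}
lemma sum_pow_card (U : Finset (Fin n)) (x y : ℝ) :
    ∑ A ∈ U.powerset, x ^ A.card * y ^ (U.card - A.card) = (x + y) ^ U.card := by
  calc ∑ A ∈ U.powerset, x ^ A.card * y ^ (U.card - A.card)
      = ∑ A ∈ U.powerset, (∏ _i ∈ A, x) * ∏ _i ∈ U \ A, y := by
        refine Finset.sum_congr rfl fun A hA => ?_
        rw [Finset.prod_const, Finset.prod_const,
          Finset.card_sdiff_of_subset (Finset.mem_powerset.1 hA)]
    _ = ∏ _i ∈ U, (x + y) := (Finset.prod_add _ _ U).symm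
    _ = (x + y) ^ U.card := Finset.prod_const _

lemma tail_le (p : ℝ) (hp0 : 0 ≤ p) (hp1 : p ≤ 1) (k : ℕ) (U : Finset (Fin n)) :
    ∑ A ∈ U.powerset.filter (fun A => A.card < k), p ^ A.card * (1 - p) ^ (U.card - A.card)
      ≤ Real.exp (2 * k) * Real.exp (-(p * (1 - Real.exp (-2)) * U.card)) := by
  set t := Real.exp (-2) with ht
  have ht0 : 0 ≤ t := (Real.exp_pos _).le
  have ht1 : t ≤ 1 := by
    rw [ht, ← Real.exp_zero]
    exact Real.exp_le_exp.2 (by norm_num)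
  have step1 : ∀ A ∈ U.powerset.filter (fun A => A.card < k),
      p ^ A.card * (1 - p) ^ (U.card - A.card)
        ≤ Real.exp (2 * k) * ((p * t) ^ A.card * (1 - p) ^ (U.card - A.card)) := by
    intro A hA
    have hak : A.card ≤ k := le_of_lt (Finset.mem_filter.1 hA).2
    have h2 : t ^ k ≤ t ^ A.card := pow_le_pow_of_le_one ht0 ht1 hak
    have h3 : 0 ≤ p ^ A.card * (1 - p) ^ (U.card - A.card) := by
      have h1p : (0:ℝ) ≤ 1 - p := by linarith
      positivity
    have hk1 : Real.exp (2 * k) * t ^ k = 1 := by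
      rw [ht, ← Real.exp_nat_mul, ← Real.exp_add, ← Real.exp_zero]
      congr 1
      ring
    calc p ^ A.card * (1 - p) ^ (U.card - A.card)
        = Real.exp (2 * k) * (t ^ k * (p ^ A.card * (1 - p) ^ (U.card - A.card))) := by
          rw [← mul_assoc, hk1, one_mul]
      _ ≤ Real.exp (2 * k) * (t ^ A.card * (p ^ A.card * (1 - p) ^ (U.card - A.card))) :=
          mul_le_mul_of_nonneg_left (mul_le_mul_of_nonneg_right h2 h3) (Real.exp_pos _).le
      _ = Real.exp (2 * k) * ((p * t) ^ A.card * (1 - p) ^ (U.card - A.card)) := by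
          rw [mul_pow]; ring
  have step2 : ∑ A ∈ U.powerset.filter (fun A => A.card < k),
        (p * t) ^ A.card * (1 - p) ^ (U.card - A.card)
      ≤ (p * t + (1 - p)) ^ U.card := by
    rw [← sum_pow_card U (p * t) (1 - p)]
    refine Finset.sum_le_sum_of_subset_of_nonneg (Finset.filter_subset _ _) ?_
    intro A hA _
    have hpt : (0:ℝ) ≤ p * t := mul_nonneg hp0 ht0
    have h1p : (0:ℝ) ≤ 1 - p := by linarith
    positivity
  have step3 : (p * t + (1 - p)) ^ U.card ≤ Real.exp (-(p * (1 - t) * U.card)) := by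
    have h2 : p * t + (1 - p) ≤ Real.exp (-(p * (1 - t))) := by
      have h1 : p * t + (1 - p) = -(p * (1 - t)) + 1 := by ring
      rw [h1]; exact Real.add_one_le_exp _
    have h0 : (0:ℝ) ≤ p * t + (1 - p) := by nlinarith
    calc (p * t + (1 - p)) ^ U.card ≤ Real.exp (-(p * (1 - t))) ^ U.card :=
          pow_le_pow_left₀ h0 h2 _
      _ = Real.exp (-(p * (1 - t) * U.card)) := by
          rw [← Real.exp_nat_mul]
          congr 1
          ring
  calc ∑ A ∈ U.powerset.filter (fun A => A.card < k), p ^ A.card * (1 - p) ^ (U.card - A.card)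
      ≤ ∑ A ∈ U.powerset.filter (fun A => A.card < k),
          Real.exp (2 * k) * ((p * t) ^ A.card * (1 - p) ^ (U.card - A.card)) :=
        Finset.sum_le_sum step1
    _ = Real.exp (2 * k) * ∑ A ∈ U.powerset.filter (fun A => A.card < k),
          (p * t) ^ A.card * (1 - p) ^ (U.card - A.card) := by rw [Finset.mul_sum]
    _ ≤ Real.exp (2 * k) * (p * t + (1 - p)) ^ U.card :=
        mul_le_mul_of_nonneg_left step2 (Real.exp_pos _).le
    _ ≤ _ := mul_le_mul_of_nonneg_left step3 (Real.exp_pos _).le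

lemma markov (p : ℝ) (hp0 : 0 ≤ p) (hp1 : p ≤ 1) (X : (Sym2 (Fin n) → Bool) → ℝ)
    (hX : ∀ ω, 0 ≤ X ω) (a : ℝ) (ha : 0 < a) :
    ∑ ω : Sym2 (Fin n) → Bool, wt p ω * (if a ≤ X ω then (1:ℝ) else 0)
      ≤ (∑ ω : Sym2 (Fin n) → Bool, wt p ω * X ω) / a := by
  rw [Finset.sum_div]
  refine Finset.sum_le_sum fun ω _ => ?_
  have hw := wt_nonneg hp0 hp1 ω
  by_cases h : a ≤ X ω
  · rw [if_pos h, mul_one, le_div_iff₀ ha]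
    exact mul_le_mul_of_nonneg_left h hw
  · rw [if_neg h, mul_zero]
    exact div_nonneg (mul_nonneg hw (hX ω)) ha.le

noncomputable def XF (n m : ℕ) (F : SimpleGraph (Fin m)) (ω : Sym2 (Fin n) → Bool) : ℕ :=
  (Finset.univ.filter fun ψ : Fin m ↪ Fin n =>
    ∀ a b, F.Adj a b → (gr n ω).Adj (ψ a) (ψ b)).card

lemma card_emb_le_XF (m : ℕ) (F : SimpleGraph (Fin m)) (ω : Sym2 (Fin n) → Bool) :
    Nat.card (F ↪g gr n ω) ≤ XF n m F ω := by
  classical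
  have h1 : Nat.card (F ↪g gr n ω) ≤ Nat.card {ψ : Fin m ↪ Fin n //
      ∀ a b, F.Adj a b → (gr n ω).Adj (ψ a) (ψ b)} := by
    refine Nat.card_le_card_of_injective
      (fun f => ⟨f.toEmbedding, fun a b hab => f.map_adj_iff.2 hab⟩) ?_
    intro f g h
    have h2 := congrArg (fun x : {ψ : Fin m ↪ Fin n //
      ∀ a b, F.Adj a b → (gr n ω).Adj (ψ a) (ψ b)} => (x.1 : Fin m → Fin n)) h
    exact RelEmbedding.ext fun x => congrFun h2 x
  rw [XF, ← Fintype.card_subtype, ← Nat.card_eq_fintype_card]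
  exact h1

lemma psi_exp (p : ℝ) (hp0 : 0 ≤ p) (hp1 : p ≤ 1) (m : ℕ) (F : SimpleGraph (Fin m))
    (ψ : Fin m ↪ Fin n) :
    ∑ ω : Sym2 (Fin n) → Bool,
        wt p ω * (if ∀ a b, F.Adj a b → (gr n ω).Adj (ψ a) (ψ b) then (1:ℝ) else 0)
      ≤ p ^ F.edgeFinset.card := by
  classical
  set S := F.edgeFinset.image (Sym2.map ψ) with hS
  have hcard : S.card = F.edgeFinset.card :=
    Finset.card_image_of_injective _ (Sym2.map.injective ψ.injective)
  have hle : ∀ ω : Sym2 (Fin n) → Bool,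
      (if ∀ a b, F.Adj a b → (gr n ω).Adj (ψ a) (ψ b) then (1:ℝ) else 0)
        ≤ (if (∀ e ∈ S, ω e = true) ∧
            (∀ e ∈ (∅ : Finset (Sym2 (Fin n))), ω e = false) then (1:ℝ) else 0) := by
    intro ω
    by_cases h : ∀ a b, F.Adj a b → (gr n ω).Adj (ψ a) (ψ b)
    · rw [if_pos h, if_pos]
      refine ⟨?_, by simp⟩
      intro e he
      obtain ⟨e₀, he₀, rfl⟩ := Finset.mem_image.1 he
      induction e₀ with
      | _ a b =>
        rw [SimpleGraph.mem_edgeFinset, SimpleGraph.mem_edgeSet] at he₀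
        have h3 := (h a b he₀).2
        rwa [Sym2.map_pair_eq]
    · rw [if_neg h]
      split <;> norm_num
  have hle2 : ∑ ω : Sym2 (Fin n) → Bool,
      wt p ω * (if ∀ a b, F.Adj a b → (gr n ω).Adj (ψ a) (ψ b) then (1:ℝ) else 0)
        ≤ ∑ ω : Sym2 (Fin n) → Bool, wt p ω * (if (∀ e ∈ S, ω e = true) ∧
            (∀ e ∈ (∅ : Finset (Sym2 (Fin n))), ω e = false) then (1:ℝ) else 0) :=
    Finset.sum_le_sum fun ω _ => mul_le_mul_of_nonneg_left (hle ω) (wt_nonneg hp0 hp1 ω)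
  calc ∑ ω : Sym2 (Fin n) → Bool,
        wt p ω * (if ∀ a b, F.Adj a b → (gr n ω).Adj (ψ a) (ψ b) then (1:ℝ) else 0)
      ≤ ∑ ω : Sym2 (Fin n) → Bool, wt p ω * (if (∀ e ∈ S, ω e = true) ∧
            (∀ e ∈ (∅ : Finset (Sym2 (Fin n))), ω e = false) then (1:ℝ) else 0) := hle2
    _ = p ^ S.card * (1 - p) ^ (∅ : Finset (Sym2 (Fin n))).card :=
        master p S ∅ (Finset.disjoint_empty_right _)
    _ = p ^ F.edgeFinset.card := by rw [hcard]; simp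

lemma XF_exp (p : ℝ) (hp0 : 0 ≤ p) (hp1 : p ≤ 1) (m : ℕ) (F : SimpleGraph (Fin m)) :
    ∑ ω : Sym2 (Fin n) → Bool, wt p ω * (XF n m F ω : ℝ)
      ≤ (n : ℝ) ^ m * p ^ F.edgeFinset.card := by
  classical
  have hXF : ∀ ω : Sym2 (Fin n) → Bool, (XF n m F ω : ℝ) = ∑ ψ : Fin m ↪ Fin n,
      (if ∀ a b, F.Adj a b → (gr n ω).Adj (ψ a) (ψ b) then (1:ℝ) else 0) := by
    intro ω
    rw [XF, Finset.card_filter]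
    push_cast
    rfl
  have hp : 0 ≤ p ^ F.edgeFinset.card := pow_nonneg hp0 _
  calc ∑ ω : Sym2 (Fin n) → Bool, wt p ω * (XF n m F ω : ℝ)
      = ∑ ω : Sym2 (Fin n) → Bool, ∑ ψ : Fin m ↪ Fin n,
          wt p ω * (if ∀ a b, F.Adj a b → (gr n ω).Adj (ψ a) (ψ b) then (1:ℝ) else 0) := by
        refine Finset.sum_congr rfl fun ω _ => ?_
        rw [hXF ω, Finset.mul_sum]
    _ = ∑ ψ : Fin m ↪ Fin n, ∑ ω : Sym2 (Fin n) → Bool,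
          wt p ω * (if ∀ a b, F.Adj a b → (gr n ω).Adj (ψ a) (ψ b) then (1:ℝ) else 0) :=
        Finset.sum_comm
    _ ≤ ∑ _ψ : Fin m ↪ Fin n, p ^ F.edgeFinset.card :=
        Finset.sum_le_sum fun ψ _ => psi_exp p hp0 hp1 m F ψ
    _ = (Fintype.card (Fin m ↪ Fin n) : ℝ) * p ^ F.edgeFinset.card := by
        rw [Finset.sum_const, Finset.card_univ, nsmul_eq_mul]
    _ ≤ (n : ℝ) ^ m * p ^ F.edgeFinset.card := by
        refine mul_le_mul_of_nonneg_right ?_ hp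
        rw [Fintype.card_embedding_eq, Fintype.card_fin, Fintype.card_fin]
        calc ((Nat.descFactorial n m : ℕ) : ℝ) ≤ ((n ^ m : ℕ) : ℝ) := by
              exact_mod_cast Nat.descFactorial_le_pow n m
          _ = (n : ℝ) ^ m := by push_cast; ring

lemma eF_eq (m : ℕ) (F : SimpleGraph (Fin m)) : Nat.card F.edgeSet = F.edgeFinset.card := by
  rw [Nat.card_eq_fintype_card, SimpleGraph.edgeFinset, Set.toFinset_card]

lemma eF_le (m : ℕ) (F : SimpleGraph (Fin m)) : Nat.card F.edgeSet ≤ m * m := by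
  have h1 : Nat.card F.edgeSet ≤ Nat.card (Sym2 (Fin m)) :=
    Nat.card_le_card_of_injective Subtype.val Subtype.val_injective
  have h2 : Nat.card (Sym2 (Fin m)) ≤ Nat.card (Fin m × Fin m) := by
    refine Nat.card_le_card_of_surjective (fun q : Fin m × Fin m => s(q.1, q.2)) ?_
    intro z
    induction z with
    | _ a b => exact ⟨(a, b), rfl⟩
  have h3 : Nat.card (Fin m × Fin m) = m * m := by
    rw [Nat.card_eq_fintype_card, Fintype.card_prod, Fintype.card_fin]
  omega


lemma exp_two_ge : (6:ℝ) ≤ Real.exp 2 := by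
  have h := Real.exp_one_gt_d9
  have h2 : Real.exp 2 = Real.exp 1 * Real.exp 1 := by
    rw [← Real.exp_add]; norm_num
  nlinarith [Real.exp_pos 1]

lemma exp_neg_two_le : Real.exp (-2) ≤ 1/6 := by
  rw [Real.exp_neg, show (1:ℝ)/6 = 6⁻¹ by norm_num]
  exact inv_anti₀ (by norm_num) exp_two_ge

lemma exp_neg_two_le' : Real.exp (-2) ≤ 1/4 := le_trans exp_neg_two_le (by norm_num)

lemma exp_four_le : Real.exp 4 ≤ (100:ℝ) := by
  have h := Real.exp_one_lt_d9
  have h2 : Real.exp 2 = Real.exp 1 * Real.exp 1 := by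
    rw [← Real.exp_add]; norm_num
  have h4 : Real.exp 4 = Real.exp 2 * Real.exp 2 := by
    rw [← Real.exp_add]; norm_num
  have h3 : Real.exp 2 < 7.39 := by nlinarith [Real.exp_pos 1]
  nlinarith [Real.exp_pos 2]

lemma log_ge_four {n : ℕ} (hn : 100 ≤ n) : (4:ℝ) ≤ Real.log n := by
  have hn0 : (0:ℝ) < n := by
    have : (100:ℝ) ≤ n := by exact_mod_cast hn
    linarith
  rw [Real.le_log_iff_exp_le hn0]
  calc Real.exp 4 ≤ 100 := exp_four_le
    _ ≤ n := by exact_mod_cast hn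

lemma numeric (n k : ℕ) (hn : 100 ≤ n) (hlog : (Real.log n)^2 ≤ (k:ℝ))
    (h60 : 60 * k ≤ n) (hk1 : 1 ≤ k) :
    (n:ℝ) * (Real.exp (2*(k:ℝ)) *
      Real.exp (-((60*(k:ℝ)/(n:ℝ)) * (1 - Real.exp (-2)) * (((n:ℝ)-1)/2)))) ≤ 1/4 := by
  have hN100 : (100:ℝ) ≤ (n:ℝ) := by exact_mod_cast hn
  have hc1 : (1:ℝ) ≤ (k:ℝ) := by exact_mod_cast hk1
  have h60' : 60 * (k:ℝ) ≤ (n:ℝ) := by exact_mod_cast h60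
  set t := Real.exp (-2) with htdef
  set N := (n:ℝ) with hNdef
  set c := (k:ℝ) with hcdef
  have hN0 : (0:ℝ) < N := by linarith
  have ht0 : 0 < t := Real.exp_pos _
  have ht6 : t ≤ 1/6 := exp_neg_two_le
  have hlog4 : (4:ℝ) ≤ Real.log N := log_ge_four hn
  -- step 1 : the exponent is large
  have hA : 25*c - 1/2 ≤ (60*c/N) * (1 - t) * ((N-1)/2) := by
    have hq1 : c/N ≤ 1/60 := by
      rw [div_le_div_iff₀ hN0 (by norm_num : (0:ℝ) < 60)]
      linarith
    have hq0 : 0 ≤ c/N := by positivity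
    have hqN : c/N * N = c := div_mul_cancel₀ c hN0.ne'
    have hrw : 60*c/N = 60*(c/N) := by ring
    rw [hrw]
    set q := c/N
    nlinarith [mul_nonneg hq0 (by linarith : (0:ℝ) ≤ N - 1),
      mul_nonneg (mul_nonneg hq0 (by linarith : (0:ℝ) ≤ 1/6 - t))
        (by linarith : (0:ℝ) ≤ N - 1)]
  -- step 2 : collapse the exponentials
  have h2 : N * (Real.exp (2*c) * Real.exp (-((60*c/N) * (1 - t) * ((N-1)/2))))
      ≤ N * Real.exp (1/2 - 23*c) := by
    refine mul_le_mul_of_nonneg_left ?_ hN0.le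
    rw [← Real.exp_add]
    refine Real.exp_le_exp.2 ?_
    linarith
  refine le_trans h2 ?_
  -- step 3 : N * exp(1/2 - 23c) ≤ 1/4
  have hNe : N = Real.exp (Real.log N) := (Real.exp_log hN0).symm
  have h3 : N * Real.exp (1/2 - 23*c) = Real.exp (Real.log N + (1/2 - 23*c)) := by
    rw [Real.exp_add, ← hNe]
  rw [h3]
  refine le_trans (le_trans (Real.exp_le_exp.2 ?_) exp_neg_two_le') (by norm_num)
  have hsq : 4 * Real.log N ≤ (Real.log N)^2 := by
    nlinarith [mul_nonneg (sub_nonneg.2 hlog4) (by linarith : (0:ℝ) ≤ Real.log N)]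
  nlinarith


end Stmt3

open Stmt3

/-- Lemma 3.1: for every `ℓ > 0` there are `L, n₀ > 0` such that for every
`n ≥ n₀` and every `k` with `(log n)² ≤ k < n/3` there is a bipartite `n`-vertex graph `H`
with minimum degree at least `k` such that the number of embeddings of any graph `F` with at
most `ℓ` vertices into `H` is at most `L ⬝ n^{v(F)} (k/n)^{e(F)}`. -/
theorem statement3 (ℓ : ℕ) (hℓ : 0 < ℓ) :
    ∃ L : ℝ, 0 < L ∧ ∃ n₀ : ℕ, 0 < n₀ ∧ ∀ n : ℕ, n₀ ≤ n → ∀ k : ℕ,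
      (Real.log n) ^ 2 ≤ (k : ℝ) → (k : ℝ) < (n : ℝ) / 3 →
      ∃ H : SimpleGraph (Fin n), H.Colorable 2 ∧ (∀ v, k ≤ degR H v) ∧
        ∀ m : ℕ, m ≤ ℓ → ∀ F : SimpleGraph (Fin m),
          (Nat.card (F ↪g H) : ℝ) ≤ L * (n : ℝ) ^ m * ((k : ℝ) / (n : ℝ)) ^ (Nat.card F.edgeSet) := by
  classical
  set M : ℝ := ∑ m ∈ Finset.range (ℓ+1), (Fintype.card (SimpleGraph (Fin m)) : ℝ) with hM
  have hM0 : 0 ≤ M := Finset.sum_nonneg fun m _ => by positivity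
  have hL60 : (0:ℝ) < 60 ^ (ℓ*ℓ) := by positivity
  refine ⟨(4*M+5) * 60^(ℓ*ℓ), by nlinarith, 100, by norm_num, ?_⟩
  intro n hn k hklog hkn3
  have hn0 : 0 < n := by omega
  have hn0' : (0:ℝ) < n := by exact_mod_cast hn0
  have hk3 : 3 * k < n := by
    have h1 : (3:ℝ) * k < n := by linarith
    exact_mod_cast h1
  have hk1 : 1 ≤ k := by
    rcases Nat.eq_zero_or_pos k with rfl | h
    · exfalso
      have h4 := log_ge_four hn
      push_cast at hklog
      nlinarith
    · exact h
  have hk1' : (1:ℝ) ≤ k := by exact_mod_cast hk1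
  -- the bound on the number of edges of a small graph
  have heFle : ∀ m : ℕ, m ≤ ℓ → ∀ F : SimpleGraph (Fin m), Nat.card F.edgeSet ≤ ℓ*ℓ :=
    fun m hm F => le_trans (eF_le m F) (Nat.mul_le_mul hm hm)
  by_cases hcase : 60 * k ≤ n
  · -- random case
    set p : ℝ := 60 * (k:ℝ) / (n:ℝ) with hp
    have hp0 : 0 ≤ p := by positivity
    have hppos : 0 < p := by
      rw [hp]
      have : (0:ℝ) < (k:ℝ) := by linarith
      positivity
    have hp1 : p ≤ 1 := by
      rw [hp, div_le_one hn0']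
      exact_mod_cast hcase
    set Y : (Sym2 (Fin n) → Bool) → ℝ := fun ω => ∑ m ∈ Finset.range (ℓ+1),
      ∑ F : SimpleGraph (Fin m),
        (XF n m F ω : ℝ) / ((n:ℝ)^m * p^(F.edgeFinset.card)) with hY
    have hdenom : ∀ (m : ℕ) (e : ℕ), (0:ℝ) < (n:ℝ)^m * p^e := by
      intro m e; positivity
    have hYnonneg : ∀ ω, 0 ≤ Y ω := by
      intro ω
      refine Finset.sum_nonneg fun m _ => Finset.sum_nonneg fun F _ => ?_
      have := (hdenom m F.edgeFinset.card).le
      positivity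
    -- expectation of Y
    have hEY : ∑ ω : Sym2 (Fin n) → Bool, wt p ω * Y ω ≤ M := by
      have h1 : ∀ ω : Sym2 (Fin n) → Bool, wt p ω * Y ω
          = ∑ m ∈ Finset.range (ℓ+1), ∑ F : SimpleGraph (Fin m),
              wt p ω * (XF n m F ω : ℝ) / ((n:ℝ)^m * p^(F.edgeFinset.card)) := by
        intro ω
        simp only [hY]
        rw [Finset.mul_sum]
        refine Finset.sum_congr rfl fun m _ => ?_
        rw [Finset.mul_sum]
        exact Finset.sum_congr rfl fun F _ => (mul_div_assoc _ _ _).symm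
      have h2 : ∑ ω : Sym2 (Fin n) → Bool, wt p ω * Y ω
          = ∑ m ∈ Finset.range (ℓ+1), ∑ F : SimpleGraph (Fin m),
              (∑ ω : Sym2 (Fin n) → Bool, wt p ω * (XF n m F ω : ℝ))
                / ((n:ℝ)^m * p^(F.edgeFinset.card)) := by
        rw [Finset.sum_congr rfl fun ω _ => h1 ω, Finset.sum_comm]
        refine Finset.sum_congr rfl fun m _ => ?_
        rw [Finset.sum_comm]
        exact Finset.sum_congr rfl fun F _ => (Finset.sum_div _ _ _).symm
      rw [h2, hM]
      refine Finset.sum_le_sum fun m _ => ?_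
      calc ∑ F : SimpleGraph (Fin m),
            (∑ ω : Sym2 (Fin n) → Bool, wt p ω * (XF n m F ω : ℝ))
              / ((n:ℝ)^m * p^(F.edgeFinset.card))
          ≤ ∑ _F : SimpleGraph (Fin m), (1:ℝ) := by
            refine Finset.sum_le_sum fun F _ => ?_
            rw [div_le_one (hdenom m F.edgeFinset.card)]
            exact XF_exp p hp0 hp1 m F
        _ = (Fintype.card (SimpleGraph (Fin m)) : ℝ) := by
            rw [Finset.sum_const, Finset.card_univ, nsmul_eq_mul, mul_one]
    -- Markov for Y
    have hP2 : ∑ ω : Sym2 (Fin n) → Bool, wt p ω * (if 4*(M+1) ≤ Y ω then (1:ℝ) else 0)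
        ≤ 1/4 := by
      refine le_trans (markov p hp0 hp1 Y hYnonneg (4*(M+1)) (by linarith)) ?_
      rw [div_le_iff₀ (by linarith : (0:ℝ) < 4*(M+1))]
      linarith
    -- union bound for degrees
    have hP1 : ∑ ω : Sym2 (Fin n) → Bool,
        wt p ω * (if ∃ v : Fin n, (crossNbr n ω v).card < k then (1:ℝ) else 0) ≤ 1/4 := by
      have hpoint : ∀ ω : Sym2 (Fin n) → Bool,
          (if ∃ v : Fin n, (crossNbr n ω v).card < k then (1:ℝ) else 0)
            ≤ ∑ v : Fin n, (if (crossNbr n ω v).card < k then (1:ℝ) else 0) := by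
        intro ω
        by_cases h : ∃ v : Fin n, (crossNbr n ω v).card < k
        · obtain ⟨v, hv⟩ := h
          rw [if_pos ⟨v, hv⟩]
          calc (1:ℝ) = if (crossNbr n ω v).card < k then (1:ℝ) else 0 := by rw [if_pos hv]
            _ ≤ _ := Finset.single_le_sum (f := fun v : Fin n =>
                if (crossNbr n ω v).card < k then (1:ℝ) else 0)
                (fun v _ => by positivity) (Finset.mem_univ v)
        · rw [if_neg h]
          exact Finset.sum_nonneg fun v _ => by positivity
      have hvbound : ∀ v : Fin n, ∑ ω : Sym2 (Fin n) → Bool,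
          wt p ω * (if (crossNbr n ω v).card < k then (1:ℝ) else 0)
            ≤ Real.exp (2*(k:ℝ)) *
              Real.exp (-(p * (1 - Real.exp (-2)) * (((n:ℝ)-1)/2))) := by
        intro v
        rw [deg_exp p k v]
        refine le_trans (tail_le p hp0 hp1 k _) ?_
        refine mul_le_mul_of_nonneg_left (Real.exp_le_exp.2 ?_) (Real.exp_pos _).le
        rw [neg_le_neg_iff]
        have hc := (card_uv_bounds v).1
        have hcard : ((n:ℝ)-1)/2
            ≤ ((Finset.univ.filter fun u : Fin n => sd n u ≠ sd n v).card : ℝ) := by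
          have h0 : n ≤ 2*(Finset.univ.filter fun u : Fin n => sd n u ≠ sd n v).card + 1 := by
            omega
          have h1 : (n:ℝ) ≤ 2*((Finset.univ.filter fun u : Fin n => sd n u ≠ sd n v).card : ℝ) + 1 := by
            exact_mod_cast h0
          linarith
        have h1t : (0:ℝ) ≤ 1 - Real.exp (-2) := by
          have := exp_neg_two_le
          linarith
        have hpt : (0:ℝ) ≤ p * (1 - Real.exp (-2)) := mul_nonneg hp0 h1t
        exact mul_le_mul_of_nonneg_left hcard hpt
      calc ∑ ω : Sym2 (Fin n) → Bool,
            wt p ω * (if ∃ v : Fin n, (crossNbr n ω v).card < k then (1:ℝ) else 0)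
          ≤ ∑ ω : Sym2 (Fin n) → Bool, ∑ v : Fin n,
              wt p ω * (if (crossNbr n ω v).card < k then (1:ℝ) else 0) := by
            refine Finset.sum_le_sum fun ω _ => ?_
            rw [← Finset.mul_sum]
            exact mul_le_mul_of_nonneg_left (hpoint ω) (wt_nonneg hp0 hp1 ω)
        _ = ∑ v : Fin n, ∑ ω : Sym2 (Fin n) → Bool,
              wt p ω * (if (crossNbr n ω v).card < k then (1:ℝ) else 0) := Finset.sum_comm
        _ ≤ ∑ _v : Fin n, Real.exp (2*(k:ℝ)) *
              Real.exp (-(p * (1 - Real.exp (-2)) * (((n:ℝ)-1)/2))) :=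
            Finset.sum_le_sum fun v _ => hvbound v
        _ = (n:ℝ) * (Real.exp (2*(k:ℝ)) *
              Real.exp (-(p * (1 - Real.exp (-2)) * (((n:ℝ)-1)/2)))) := by
            rw [Finset.sum_const, Finset.card_univ, nsmul_eq_mul, Fintype.card_fin]
        _ ≤ 1/4 := by
            rw [hp]
            exact numeric n k hn hklog hcase hk1
    -- existence of a good ω
    have hgood : ∃ ω : Sym2 (Fin n) → Bool,
        (∀ v : Fin n, k ≤ (crossNbr n ω v).card) ∧ Y ω < 4*(M+1) := by
      by_contra hbad
      push_neg at hbad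
      have hpt : ∀ ω : Sym2 (Fin n) → Bool, wt p ω ≤
          wt p ω * (if ∃ v : Fin n, (crossNbr n ω v).card < k then (1:ℝ) else 0)
            + wt p ω * (if 4*(M+1) ≤ Y ω then (1:ℝ) else 0) := by
        intro ω
        have hw := wt_nonneg hp0 hp1 ω
        by_cases hA : ∃ v : Fin n, (crossNbr n ω v).card < k
        · have h1 : (if ∃ v : Fin n, (crossNbr n ω v).card < k then (1:ℝ) else 0) = 1 :=
            if_pos hA
          rw [h1, mul_one]
          have : (0:ℝ) ≤ wt p ω * (if 4*(M+1) ≤ Y ω then (1:ℝ) else 0) := by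
            refine mul_nonneg hw ?_; positivity
          linarith
        · have hY2 : 4*(M+1) ≤ Y ω := by
            refine hbad ω fun v => ?_
            push_neg at hA
            exact hA v
          have h1 : (if 4*(M+1) ≤ Y ω then (1:ℝ) else 0) = 1 := if_pos hY2
          rw [h1, mul_one]
          have : (0:ℝ) ≤ wt p ω * (if ∃ v : Fin n, (crossNbr n ω v).card < k then (1:ℝ) else 0) := by
            refine mul_nonneg hw ?_; positivity
          linarith
      have h1 : (1:ℝ) ≤ 1/4 + 1/4 := by
        calc (1:ℝ) = ∑ ω : Sym2 (Fin n) → Bool, wt p ω := (wt_total p).symm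
          _ ≤ ∑ ω : Sym2 (Fin n) → Bool,
              (wt p ω * (if ∃ v : Fin n, (crossNbr n ω v).card < k then (1:ℝ) else 0)
                + wt p ω * (if 4*(M+1) ≤ Y ω then (1:ℝ) else 0)) :=
            Finset.sum_le_sum fun ω _ => hpt ω
          _ = (∑ ω : Sym2 (Fin n) → Bool,
                wt p ω * (if ∃ v : Fin n, (crossNbr n ω v).card < k then (1:ℝ) else 0))
              + ∑ ω : Sym2 (Fin n) → Bool,
                wt p ω * (if 4*(M+1) ≤ Y ω then (1:ℝ) else 0) := Finset.sum_add_distrib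
          _ ≤ 1/4 + 1/4 := add_le_add hP1 hP2
      norm_num at h1
    obtain ⟨ω, hdeg, hYlt⟩ := hgood
    refine ⟨gr n ω, gr_colorable ω, ?_, ?_⟩
    · intro v
      exact le_trans (hdeg v) (crossNbr_card_le_degree ω v)
    · intro m hm F
      have hterm : (XF n m F ω : ℝ) / ((n:ℝ)^m * p^(F.edgeFinset.card)) ≤ Y ω := by
        simp only [hY]
        refine le_trans (Finset.single_le_sum (f := fun F' : SimpleGraph (Fin m) =>
            (XF n m F' ω : ℝ) / ((n:ℝ)^m * p^(F'.edgeFinset.card)))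
            (fun F' _ => by
              have := (hdenom m F'.edgeFinset.card).le
              positivity) (Finset.mem_univ F)) ?_
        refine Finset.single_le_sum (f := fun m' : ℕ => ∑ F' : SimpleGraph (Fin m'),
            (XF n m' F' ω : ℝ) / ((n:ℝ)^m' * p^(F'.edgeFinset.card)))
            (fun m' _ => Finset.sum_nonneg fun F' _ => by
              have := (hdenom m' F'.edgeFinset.card).le
              positivity) ?_
        rw [Finset.mem_range]
        omega
      have hXFb : (XF n m F ω : ℝ) ≤ 4*(M+1) * ((n:ℝ)^m * p^(F.edgeFinset.card)) := by
        rw [div_le_iff₀ (hdenom m F.edgeFinset.card)] at hterm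
        calc (XF n m F ω : ℝ) ≤ Y ω * ((n:ℝ)^m * p^(F.edgeFinset.card)) := hterm
          _ ≤ 4*(M+1) * ((n:ℝ)^m * p^(F.edgeFinset.card)) :=
            mul_le_mul_of_nonneg_right hYlt.le (hdenom m F.edgeFinset.card).le
      set e := Nat.card F.edgeSet with he
      have hee : F.edgeFinset.card = e := (eF_eq m F).symm
      rw [hee] at hXFb
      have he2 : e ≤ ℓ*ℓ := heFle m hm F
      have hsixty : (60:ℝ)^e ≤ 60^(ℓ*ℓ) := pow_le_pow_right₀ (by norm_num) he2
      have hpe : p^e = 60^e * ((k:ℝ)/(n:ℝ))^e := by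
        rw [hp, mul_div_assoc, mul_pow]
      have hkey : 4*(M+1) * (60:ℝ)^e ≤ (4*M+5) * 60^(ℓ*ℓ) := by
        refine mul_le_mul (by linarith) hsixty (by positivity) (by linarith)
      calc (Nat.card (F ↪g gr n ω) : ℝ) ≤ (XF n m F ω : ℝ) := by
            exact_mod_cast card_emb_le_XF m F ω
        _ ≤ 4*(M+1) * ((n:ℝ)^m * p^e) := hXFb
        _ = (4*(M+1) * 60^e) * ((n:ℝ)^m * ((k:ℝ)/(n:ℝ))^e) := by rw [hpe]; ring
        _ ≤ ((4*M+5) * 60^(ℓ*ℓ)) * ((n:ℝ)^m * ((k:ℝ)/(n:ℝ))^e) := by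
            refine mul_le_mul_of_nonneg_right hkey ?_
            positivity
        _ = (4*M+5) * 60^(ℓ*ℓ) * (n:ℝ)^m * ((k:ℝ)/(n:ℝ))^e := by ring
  · -- complete bipartite case
    push_neg at hcase
    refine ⟨gr n (fun _ => true), gr_colorable _, ?_, ?_⟩
    · intro v
      have hcc : crossNbr n (fun _ => true) v
          = Finset.univ.filter fun u : Fin n => sd n u ≠ sd n v := by
        rw [crossNbr]
        exact Finset.filter_congr fun u _ => by simp
      have hb := (card_uv_bounds v).1
      refine le_trans ?_ (crossNbr_card_le_degree (fun _ => true) v)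
      rw [hcc]
      omega
    · intro m hm F
      have hn1 : Nat.card (F ↪g gr n (fun _ => true)) ≤ n^m := by
        refine le_trans (card_emb_le_XF m F _) (le_trans (Finset.card_filter_le _ _) ?_)
        rw [Finset.card_univ, Fintype.card_embedding_eq, Fintype.card_fin, Fintype.card_fin]
        exact Nat.descFactorial_le_pow n m
      have hn1' : (Nat.card (F ↪g gr n (fun _ => true)) : ℝ) ≤ (n:ℝ)^m := by
        calc (Nat.card (F ↪g gr n (fun _ => true)) : ℝ) ≤ ((n^m : ℕ) : ℝ) := by
              exact_mod_cast hn1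
          _ = (n:ℝ)^m := by push_cast; ring
      set e := Nat.card F.edgeSet with he
      have he2 : e ≤ ℓ*ℓ := heFle m hm F
      have hkn : (1:ℝ)/60 ≤ (k:ℝ)/(n:ℝ) := by
        rw [div_le_div_iff₀ (by norm_num : (0:ℝ) < 60) hn0']
        have : (n:ℝ) < 60*(k:ℝ) := by exact_mod_cast hcase
        linarith
      have hkn1 : (k:ℝ)/(n:ℝ) ≤ 1 := by
        rw [div_le_one hn0']
        linarith
      have hpow : ((1:ℝ)/60)^(ℓ*ℓ) ≤ ((k:ℝ)/(n:ℝ))^e := by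
        calc ((1:ℝ)/60)^(ℓ*ℓ) ≤ ((k:ℝ)/(n:ℝ))^(ℓ*ℓ) :=
              pow_le_pow_left₀ (by norm_num) hkn _
          _ ≤ ((k:ℝ)/(n:ℝ))^e := pow_le_pow_of_le_one (by positivity) hkn1 he2
      have h60id : (60:ℝ)^(ℓ*ℓ) * ((1:ℝ)/60)^(ℓ*ℓ) = 1 := by
        rw [← mul_pow]
        norm_num
      have hstep : (n:ℝ)^m ≤ (4*M+5) * (60:ℝ)^(ℓ*ℓ) * (n:ℝ)^m * ((1:ℝ)/60)^(ℓ*ℓ) := by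
        have hid : (4*M+5) * (60:ℝ)^(ℓ*ℓ) * (n:ℝ)^m * ((1:ℝ)/60)^(ℓ*ℓ)
            = (4*M+5) * (n:ℝ)^m := by
          rw [show (4*M+5) * (60:ℝ)^(ℓ*ℓ) * (n:ℝ)^m * ((1:ℝ)/60)^(ℓ*ℓ)
              = (4*M+5) * ((60:ℝ)^(ℓ*ℓ) * ((1:ℝ)/60)^(ℓ*ℓ)) * (n:ℝ)^m by ring, h60id,
            mul_one]
        rw [hid]
        nlinarith [pow_nonneg hn0'.le m]
      have hc0 : (0:ℝ) ≤ (4*M+5) * 60^(ℓ*ℓ) * (n:ℝ)^m :=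
        mul_nonneg (mul_nonneg (by linarith) (by positivity)) (by positivity)
      calc (Nat.card (F ↪g gr n (fun _ => true)) : ℝ) ≤ (n:ℝ)^m := hn1'
        _ ≤ (4*M+5) * (60:ℝ)^(ℓ*ℓ) * (n:ℝ)^m * ((1:ℝ)/60)^(ℓ*ℓ) := hstep
        _ ≤ (4*M+5) * 60^(ℓ*ℓ) * (n:ℝ)^m * ((k:ℝ)/(n:ℝ))^e :=
            mul_le_mul_of_nonneg_left hpow hc0
end

section
/- Let α ∈ (0,1) and let γ, β be positive constants with 8γ < β < (1−α)/5, and assume (1−α)n is a positive integer. If G is an n-vertex graph with minimum degree δ(G) ≥ αn, then one of the following holds: (a) there is a partition V(G) = A₁ ∪ A₂ with (1−α−γ)n ≤ |A₁| ≤ (1−α+γ)n such that (i) for every x ∈ A₁, |A₂ \ N_G(x)| ≤ 4βn, (ii) for every x ∈ A₂, |N_G(x) ∩ A₁| ≥ βn, and (iii) the number of pairs (a₁,a₂) ∈ A₁ × A₂ with a₁a₂ ∉ E(G) is at most γn²; or (b) every subset X ⊆ V(G) with |X| = (1−α)n satisfies e_G(X) ≥ γ²n². -/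
open Finset
open scoped Classical

set_option maxHeartbeats 2000000 in
private lemma handshake {n : ℕ} (G : SimpleGraph (Fin n)) (X : Set (Fin n)) :
    ∑ x ∈ X.toFinset, (G.neighborFinset x ∩ X.toFinset).card = 2 * edgesIn G X := by
  classical
  set G' : SimpleGraph (Fin n) :=
    { Adj := fun a b => G.Adj a b ∧ a ∈ X ∧ b ∈ X
      symm := ⟨fun a b h => ⟨h.1.symm, h.2.2, h.2.1⟩⟩
      loopless := ⟨fun a h => G.loopless.irrefl a h.1⟩ } with hG'
  have hedge : edgesIn G X = G'.edgeFinset.card := by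
    have hset : {e : Sym2 (Fin n) | e ∈ G.edgeSet ∧ ∀ v ∈ e, v ∈ X} = G'.edgeSet := by
      ext e
      refine Sym2.ind (fun a b => ?_) e
      simp only [Set.mem_setOf_eq, SimpleGraph.mem_edgeSet, Sym2.mem_iff, hG']
      constructor
      · rintro ⟨h, hv⟩
        exact ⟨h, hv a (Or.inl rfl), hv b (Or.inr rfl)⟩
      · rintro ⟨h, ha, hb⟩
        exact ⟨h, fun v hv => hv.elim (fun e => e ▸ ha) (fun e => e ▸ hb)⟩
    have : edgesIn G X = Nat.card G'.edgeSet := by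
      rw [edgesIn, ← hset]
      rfl
    rw [this, Nat.card_coe_set_eq, Set.ncard_eq_toFinset_card']
    congr 1
  have hsum := SimpleGraph.sum_degrees_eq_twice_card_edges G'
  rw [hedge, ← hsum]
  rw [← Finset.sum_subset (Finset.subset_univ X.toFinset)
    (fun x _ hx => ?_)]
  · refine Finset.sum_congr rfl fun x hx => ?_
    have hxX : x ∈ X := by simpa using hx
    rw [SimpleGraph.degree]
    congr 1
    ext u
    simp [hG', hxX, and_comm]
  · rw [SimpleGraph.degree, Finset.card_eq_zero]
    ext u
    simp only [SimpleGraph.mem_neighborFinset, Finset.notMem_empty, iff_false, hG']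
    rintro ⟨-, hxX, -⟩
    exact hx (by simpa using hxX)

private lemma pair_count {n : ℕ} (G : SimpleGraph (Fin n)) (p q : Fin n → Prop) :
    Nat.card {pq : Fin n × Fin n // p pq.1 ∧ q pq.2 ∧ ¬ G.Adj pq.1 pq.2}
      = ∑ x ∈ univ.filter p, ((univ.filter q).filter fun y => ¬ G.Adj x y).card := by
  classical
  rw [Nat.card_eq_fintype_card, Fintype.card_subtype, Finset.card_filter,
    Fintype.sum_prod_type, Finset.sum_filter]
  refine Finset.sum_congr rfl fun x _ => ?_
  rw [Finset.card_filter, Finset.sum_filter]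
  by_cases hx : p x
  · simp only [hx, if_true]
    refine Finset.sum_congr rfl fun y _ => ?_
    by_cases hy : q y <;> by_cases ha : G.Adj x y <;> simp [hx, hy, ha]
  · simp [hx]


set_option maxHeartbeats 2000000 in
/-- Lemma 4.1, extremal vs non-extremal case distinction. -/
theorem statement4 (α γ β : ℝ) (hα0 : 0 < α) (hα1 : α < 1) (hγ : 0 < γ) (hβ : 0 < β)
    (hγβ : 8 * γ < β) (hβα : β < (1 - α) / 5) (n : ℕ) (G : SimpleGraph (Fin n))
    (hint : ∃ m : ℕ, 0 < m ∧ (m : ℝ) = (1 - α) * n)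
    (hdeg : ∀ v, α * n ≤ (degR G v : ℝ)) :
    (∃ A₁ A₂ : Set (Fin n), A₁ ∪ A₂ = Set.univ ∧ Disjoint A₁ A₂ ∧
      (1 - α - γ) * n ≤ (A₁.ncard : ℝ) ∧ (A₁.ncard : ℝ) ≤ (1 - α + γ) * n ∧
      (∀ x ∈ A₁, ((A₂ \ G.neighborSet x).ncard : ℝ) ≤ 4 * β * n) ∧
      (∀ x ∈ A₂, β * n ≤ ((G.neighborSet x ∩ A₁).ncard : ℝ)) ∧
      ((Nat.card {pq : Fin n × Fin n // pq.1 ∈ A₁ ∧ pq.2 ∈ A₂ ∧ ¬ G.Adj pq.1 pq.2} : ℝ)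
        ≤ γ * (n : ℝ) ^ 2)) ∨
    (∀ X : Set (Fin n), (X.ncard : ℝ) = (1 - α) * n →
      γ ^ 2 * (n : ℝ) ^ 2 ≤ (edgesIn G X : ℝ)) := by
  classical
  obtain ⟨m, hm0, hmn⟩ := hint
  by_cases hb : ∀ X : Set (Fin n), (X.ncard : ℝ) = (1 - α) * n →
      γ ^ 2 * (n : ℝ) ^ 2 ≤ (edgesIn G X : ℝ)
  · exact Or.inr hb
  push_neg at hb
  obtain ⟨X, hXcard, hXe⟩ := hb
  left
  -- numeric basics
  have hn0 : 0 < (n : ℝ) := by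
    rcases Nat.eq_zero_or_pos n with h | h
    · exfalso
      rw [h] at hmn
      simp at hmn
      omega
    · exact_mod_cast h
  have hβ5 : β < 1 / 5 := by nlinarith
  have hγ40 : γ < 1 / 40 := by nlinarith
  have hmR : (m : ℝ) ≤ n := by nlinarith
  have hmn' : m ≤ n := by exact_mod_cast hmR
  -- Finset versions
  set Xf : Finset (Fin n) := X.toFinset with hXfdef
  have hXfcard : (Xf.card : ℝ) = (1 - α) * n := by
    rw [hXfdef, ← Set.ncard_eq_toFinset_card']; exact hXcard
  set d : Fin n → ℕ := fun v => (G.neighborFinset v ∩ Xf).card with hd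
  have hdeg' : ∀ v, α * n ≤ ((G.neighborFinset v).card : ℝ) := by
    intro v
    have h := hdeg v
    rwa [degR, Nat.card_eq_fintype_card, SimpleGraph.card_neighborSet_eq_degree] at h
  have hHS : ∑ x ∈ Xf, d x = 2 * edgesIn G X := handshake G X
  have hEdge : ∑ x ∈ Xf, (d x : ℝ) < 2 * (γ ^ 2 * (n : ℝ) ^ 2) := by
    calc ∑ x ∈ Xf, (d x : ℝ) = ((∑ x ∈ Xf, d x : ℕ) : ℝ) := by push_cast; ring
      _ = 2 * (edgesIn G X : ℝ) := by rw [hHS]; push_cast; ring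
      _ < 2 * (γ ^ 2 * (n : ℝ) ^ 2) := by linarith
  have hcross : ∑ q ∈ Xfᶜ, (Xf.filter fun x => ¬ G.Adj q x).card
      = ∑ x ∈ Xf, (Xfᶜ.filter fun z => ¬ G.Adj x z).card := by
    simp only [Finset.card_filter]
    rw [Finset.sum_comm]
    refine Finset.sum_congr rfl fun x _ => Finset.sum_congr rfl fun z _ => ?_
    have : G.Adj z x ↔ G.Adj x z := G.adj_comm z x
    rw [this]
  have hXfcompl : ((Xfᶜ.card : ℕ) : ℝ) = α * n := by
    have h1 : Xf.card + Xfᶜ.card = n := by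
      rw [Finset.card_add_card_compl, Fintype.card_fin]
    have h2 : ((Xf.card : ℕ) : ℝ) + ((Xfᶜ.card : ℕ) : ℝ) = n := by exact_mod_cast h1
    linarith [hXfcard]
  have hfd : ∀ x ∈ Xf, ((Xfᶜ.filter fun z => ¬ G.Adj x z).card : ℝ) ≤ d x := by
    intro x hx
    have h1 : (Xfᶜ.filter fun z => G.Adj x z).card + (Xfᶜ.filter fun z => ¬ G.Adj x z).card
        = Xfᶜ.card := Finset.card_filter_add_card_filter_not _
    have h2 : Xfᶜ.filter (fun z => G.Adj x z) = G.neighborFinset x \ Xf := by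
      ext z
      simp [Finset.mem_sdiff, and_comm]
    have h3 : d x + (G.neighborFinset x \ Xf).card = (G.neighborFinset x).card :=
      Finset.card_inter_add_card_sdiff _ _
    rw [h2] at h1
    have c1 : ((G.neighborFinset x \ Xf).card : ℝ)
        + ((Xfᶜ.filter fun z => ¬ G.Adj x z).card : ℝ) = ((Xfᶜ.card : ℕ) : ℝ) := by
      exact_mod_cast h1
    have c3 : (d x : ℝ) + ((G.neighborFinset x \ Xf).card : ℝ)
        = ((G.neighborFinset x).card : ℝ) := by exact_mod_cast h3
    linarith [hdeg' x, hXfcompl]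
  have hTot : ∑ q ∈ Xfᶜ, ((Xf.filter fun x => ¬ G.Adj q x).card : ℝ)
      < 2 * (γ ^ 2 * (n : ℝ) ^ 2) := by
    have e1 : ∑ q ∈ Xfᶜ, ((Xf.filter fun x => ¬ G.Adj q x).card : ℝ)
        = ∑ x ∈ Xf, ((Xfᶜ.filter fun z => ¬ G.Adj x z).card : ℝ) := by
      exact_mod_cast hcross
    rw [e1]
    exact lt_of_le_of_lt (Finset.sum_le_sum hfd) hEdge
  -- the exceptional sets
  set B1 : Finset (Fin n) := Xf.filter (fun x => ¬ ((d x : ℝ) < 2 * β * n)) with hB1def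
  set B2 : Finset (Fin n) := Xfᶜ.filter (fun z => (d z : ℝ) < 2 * β * n) with hB2def
  have hB1card : (B1.card : ℝ) ≤ γ * n / 8 := by
    have h1 : (B1.card : ℝ) * (2 * β * n) ≤ ∑ x ∈ B1, (d x : ℝ) := by
      have := Finset.card_nsmul_le_sum B1 (fun x => (d x : ℝ)) (2 * β * n)
        (fun x hx => by
          have := (Finset.mem_filter.mp hx).2
          linarith [not_lt.mp this])
      simpa [nsmul_eq_mul] using this
    have h2 : ∑ x ∈ B1, (d x : ℝ) ≤ ∑ x ∈ Xf, (d x : ℝ) :=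
      Finset.sum_le_sum_of_subset_of_nonneg (Finset.filter_subset _ _)
        (fun x _ _ => by positivity)
    have h3 : (B1.card : ℝ) * (2 * β * n) < 2 * (γ ^ 2 * (n : ℝ) ^ 2) := by
      linarith [hEdge]
    by_contra hcon
    push_neg at hcon
    have h4 : (γ * n / 8) * (2 * β * n) ≤ (B1.card : ℝ) * (2 * β * n) :=
      mul_le_mul_of_nonneg_right hcon.le (by positivity)
    nlinarith [mul_pos (mul_pos hγ hn0) hn0]
  have hB2card : (B2.card : ℝ) ≤ γ * n / 8 := by
    have hq : ∀ z ∈ B2, 3 * β * (n:ℝ) ≤ ((Xf.filter fun x => ¬ G.Adj z x).card : ℝ) := by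
      intro z hz
      obtain ⟨hzQ, hzd⟩ := Finset.mem_filter.mp hz
      have h1 : (Xf.filter fun x => G.Adj z x).card + (Xf.filter fun x => ¬ G.Adj z x).card
          = Xf.card := Finset.card_filter_add_card_filter_not _
      have h2 : Xf.filter (fun x => G.Adj z x) = G.neighborFinset z ∩ Xf := by
        ext w
        simp [and_comm]
      rw [h2] at h1
      have c1 : (d z : ℝ) + ((Xf.filter fun x => ¬ G.Adj z x).card : ℝ)
          = ((Xf.card : ℕ) : ℝ) := by exact_mod_cast h1
      have h5 : 5 * (β * (n:ℝ)) < (1 - α) * n := by nlinarith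
      linarith [hXfcard]
    have h1 : (B2.card : ℝ) * (3 * β * n)
        ≤ ∑ z ∈ B2, ((Xf.filter fun x => ¬ G.Adj z x).card : ℝ) := by
      have := Finset.card_nsmul_le_sum B2
        (fun z => ((Xf.filter fun x => ¬ G.Adj z x).card : ℝ)) (3 * β * n) hq
      simpa [nsmul_eq_mul] using this
    have h2 : ∑ z ∈ B2, ((Xf.filter fun x => ¬ G.Adj z x).card : ℝ)
        ≤ ∑ z ∈ Xfᶜ, ((Xf.filter fun x => ¬ G.Adj z x).card : ℝ) :=
      Finset.sum_le_sum_of_subset_of_nonneg (Finset.filter_subset _ _)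
        (fun z _ _ => by positivity)
    have h3 : (B2.card : ℝ) * (3 * β * n) < 2 * (γ ^ 2 * (n : ℝ) ^ 2) := by
      linarith [hTot]
    by_contra hcon
    push_neg at hcon
    have h4 : (γ * n / 8) * (3 * β * n) ≤ (B2.card : ℝ) * (3 * β * n) :=
      mul_le_mul_of_nonneg_right hcon.le (by positivity)
    nlinarith [mul_pos (mul_pos hγ hn0) hn0]
  -- the partition
  set A1 : Finset (Fin n) := univ.filter (fun v => (d v : ℝ) < 2 * β * n) with hA1def
  have hA1interXf : A1 ∩ Xf = Xf.filter (fun v => (d v : ℝ) < 2 * β * n) := by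
    ext v
    simp [hA1def, and_comm]
  have hA1diffXf : A1 \ Xf = B2 := by
    ext v
    simp [hA1def, hB2def, and_comm]
  have hs1 : (A1 ∩ Xf).card + B1.card = Xf.card := by
    rw [hA1interXf, hB1def]
    exact Finset.card_filter_add_card_filter_not _
  have hs2 : (A1 ∩ Xf).card + B2.card = A1.card := by
    rw [← hA1diffXf]
    exact Finset.card_inter_add_card_sdiff _ _
  have hs3 : A1.card + A1ᶜ.card = n := by
    rw [Finset.card_add_card_compl, Fintype.card_fin]
  have hcs1 : ((A1 ∩ Xf).card : ℝ) + (B1.card : ℝ) = (1 - α) * n := by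
    rw [← hXfcard]; exact_mod_cast hs1
  have hcs2 : ((A1 ∩ Xf).card : ℝ) + (B2.card : ℝ) = (A1.card : ℝ) := by exact_mod_cast hs2
  have hcs3 : (A1.card : ℝ) + (A1ᶜ.card : ℝ) = n := by exact_mod_cast hs3
  have hB1nn : (0:ℝ) ≤ B1.card := Nat.cast_nonneg _
  have hB2nn : (0:ℝ) ≤ B2.card := Nat.cast_nonneg _
  -- the key upper bound on non-neighbours in A1ᶜ
  have hmain : ∀ x, ((A1ᶜ \ G.neighborFinset x).card : ℝ) ≤ (B1.card : ℝ) + d x := by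
    intro x
    set Nf := G.neighborFinset x with hNf
    have k1 : (A1ᶜ ∩ Nf).card + (A1ᶜ \ Nf).card = A1ᶜ.card :=
      Finset.card_inter_add_card_sdiff _ _
    have k2 : (Nf ∩ A1).card + (Nf \ A1).card = Nf.card :=
      Finset.card_inter_add_card_sdiff _ _
    have k2' : Nf \ A1 = A1ᶜ ∩ Nf := by
      ext v
      simp [Finset.mem_sdiff, and_comm]
    rw [k2'] at k2
    have k3 : (Nf ∩ A1).card ≤ d x + B2.card := by
      have hsub : Nf ∩ A1 ⊆ (Nf ∩ Xf) ∪ B2 := by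
        intro v hv
        obtain ⟨hvN, hvA⟩ := Finset.mem_inter.mp hv
        by_cases hvX : v ∈ Xf
        · exact Finset.mem_union_left _ (Finset.mem_inter.mpr ⟨hvN, hvX⟩)
        · refine Finset.mem_union_right _ ?_
          rw [hB2def]
          refine Finset.mem_filter.mpr ⟨Finset.mem_compl.mpr hvX, ?_⟩
          simpa [hA1def] using hvA
      calc (Nf ∩ A1).card ≤ ((Nf ∩ Xf) ∪ B2).card := Finset.card_le_card hsub
        _ ≤ (Nf ∩ Xf).card + B2.card := Finset.card_union_le _ _
        _ = d x + B2.card := rfl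
    have c1 : ((A1ᶜ ∩ Nf).card : ℝ) + ((A1ᶜ \ Nf).card : ℝ) = (A1ᶜ.card : ℝ) := by
      exact_mod_cast k1
    have c2 : ((Nf ∩ A1).card : ℝ) + ((A1ᶜ ∩ Nf).card : ℝ) = (Nf.card : ℝ) := by
      exact_mod_cast k2
    have c3 : ((Nf ∩ A1).card : ℝ) ≤ (d x : ℝ) + (B2.card : ℝ) := by exact_mod_cast k3
    have c4 := hdeg' x
    linarith [hcs1, hcs2, hcs3]
  -- provide the partition
  refine ⟨{v | (d v : ℝ) < 2 * β * n}, {v | (d v : ℝ) < 2 * β * n}ᶜ,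
    Set.union_compl_self _, disjoint_compl_right, ?_, ?_, ?_, ?_, ?_⟩
  ·
    have hfs : ({v | (d v : ℝ) < 2 * β * n} : Set (Fin n)).toFinset = A1 := by
      ext v
      simp [hA1def]
    rw [Set.ncard_eq_toFinset_card', hfs]
    linarith [hB1card, hB2card]
  ·
    have hfs : ({v | (d v : ℝ) < 2 * β * n} : Set (Fin n)).toFinset = A1 := by
      ext v
      simp [hA1def]
    rw [Set.ncard_eq_toFinset_card', hfs]
    linarith [hB1card, hB2card]
  ·
    intro x hx
    have hxd : (d x : ℝ) < 2 * β * n := hx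
    have hfs : (({v | (d v : ℝ) < 2 * β * n} : Set (Fin n))ᶜ \ G.neighborSet x).toFinset
        = A1ᶜ \ G.neighborFinset x := by
      ext v
      simp [hA1def]
    rw [Set.ncard_eq_toFinset_card', hfs]
    have h8 : 8 * γ * (n:ℝ) < β * n := mul_lt_mul_of_pos_right hγβ hn0
    have := hmain x
    linarith [hB1card]
  ·
    intro x hx
    have hxd : 2 * β * (n:ℝ) ≤ d x := not_lt.mp hx
    have hfs : ((G.neighborSet x ∩ {v | (d v : ℝ) < 2 * β * n}) : Set (Fin n)).toFinset
        = G.neighborFinset x ∩ A1 := by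
      ext v
      simp [hA1def]
    rw [Set.ncard_eq_toFinset_card', hfs]
    have h8 : 8 * γ * (n:ℝ) < β * n := mul_lt_mul_of_pos_right hγβ hn0
    have k : d x ≤ (G.neighborFinset x ∩ A1).card + B1.card := by
      have hsub : G.neighborFinset x ∩ Xf ⊆ (G.neighborFinset x ∩ A1) ∪ B1 := by
        intro v hv
        obtain ⟨hvN, hvX⟩ := Finset.mem_inter.mp hv
        by_cases hvA : v ∈ A1
        · exact Finset.mem_union_left _ (Finset.mem_inter.mpr ⟨hvN, hvA⟩)
        · refine Finset.mem_union_right _ ?_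
          rw [hB1def]
          refine Finset.mem_filter.mpr ⟨hvX, ?_⟩
          intro hcon
          exact hvA (Finset.mem_filter.mpr ⟨Finset.mem_univ _, hcon⟩)
      calc d x = (G.neighborFinset x ∩ Xf).card := rfl
        _ ≤ ((G.neighborFinset x ∩ A1) ∪ B1).card := Finset.card_le_card hsub
        _ ≤ (G.neighborFinset x ∩ A1).card + B1.card := Finset.card_union_le _ _
    have ck : (d x : ℝ) ≤ ((G.neighborFinset x ∩ A1).card : ℝ) + (B1.card : ℝ) := by
      exact_mod_cast k
    linarith [hB1card]
  ·
    have hpc : Nat.card {pq : Fin n × Fin n //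
          pq.1 ∈ ({v | (d v : ℝ) < 2 * β * n} : Set (Fin n)) ∧
          pq.2 ∈ ({v | (d v : ℝ) < 2 * β * n} : Set (Fin n))ᶜ ∧ ¬ G.Adj pq.1 pq.2}
        = ∑ x ∈ A1, ((A1ᶜ).filter fun y => ¬ G.Adj x y).card := by
      have h := pair_count G (fun v => (d v : ℝ) < 2 * β * n)
        (fun v => ¬ ((d v : ℝ) < 2 * β * n))
      refine h.trans ?_
      refine Finset.sum_congr ?_ fun x _ => ?_
      · ext v; simp [hA1def]
      · apply Finset.card_bij (fun y _ => y)
        · intro y hy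
          simp only [Finset.mem_filter, Finset.mem_univ, true_and] at hy
          simp only [Finset.mem_filter, Finset.mem_compl]
          refine ⟨?_, hy.2⟩
          simp only [hA1def, Finset.mem_filter, Finset.mem_univ, true_and]
          exact hy.1
        · intro y₁ _ y₂ _ hh; exact hh
        · intro y hy
          simp only [Finset.mem_filter, Finset.mem_compl] at hy
          refine ⟨y, ?_, rfl⟩
          simp only [Finset.mem_filter, Finset.mem_univ, true_and]
          refine ⟨?_, hy.2⟩
          simpa [hA1def] using hy.1
    rw [hpc]
    have key : ∀ x ∈ A1, ((A1ᶜ.filter fun y => ¬ G.Adj x y).card : ℝ)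
        ≤ (B1.card : ℝ) + d x := by
      intro x hx
      have e : A1ᶜ.filter (fun y => ¬ G.Adj x y) = A1ᶜ \ G.neighborFinset x := by
        ext v
        simp [Finset.mem_sdiff]
      rw [e]
      exact hmain x
    have hsum1 : ((∑ x ∈ A1, ((A1ᶜ).filter fun y => ¬ G.Adj x y).card : ℕ) : ℝ)
        ≤ ∑ x ∈ A1, ((B1.card : ℝ) + d x) := by
      push_cast
      exact Finset.sum_le_sum key
    have hsum2 : ∑ x ∈ A1, ((B1.card : ℝ) + d x)
        = (A1.card : ℝ) * B1.card + ∑ x ∈ A1, (d x : ℝ) := by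
      rw [Finset.sum_add_distrib, Finset.sum_const, nsmul_eq_mul]
    have hsplitsum : ∑ x ∈ A1 ∩ Xf, (d x : ℝ) + ∑ x ∈ A1 \ Xf, (d x : ℝ)
        = ∑ x ∈ A1, (d x : ℝ) := Finset.sum_inter_add_sum_sdiff _ _ _
    have hsx : ∑ x ∈ A1 ∩ Xf, (d x : ℝ) ≤ ∑ x ∈ Xf, (d x : ℝ) :=
      Finset.sum_le_sum_of_subset_of_nonneg (Finset.inter_subset_right)
        (fun x _ _ => by positivity)
    have hsb : ∑ x ∈ A1 \ Xf, (d x : ℝ) ≤ (B2.card : ℝ) * (2 * β * n) := by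
      rw [hA1diffXf]
      have := Finset.sum_le_card_nsmul B2 (fun z => (d z : ℝ)) (2 * β * n)
        (fun z hz => ((Finset.mem_filter.mp hz).2).le)
      simpa [nsmul_eq_mul] using this
    have hA1n : (A1.card : ℝ) ≤ n := by
      have := Finset.card_le_univ A1
      have h2 : A1.card ≤ n := by simpa [Fintype.card_fin] using this
      exact_mod_cast h2
    have hfinal : ((∑ x ∈ A1, ((A1ᶜ).filter fun y => ¬ G.Adj x y).card : ℕ) : ℝ)
        ≤ (n:ℝ) * (γ * n / 8) + 2 * (γ ^ 2 * (n:ℝ) ^ 2) + (γ * n / 8) * (2 * β * n) := by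
      have t1 : (A1.card : ℝ) * B1.card ≤ (n:ℝ) * (γ * n / 8) :=
        mul_le_mul hA1n hB1card hB1nn (by positivity)
      have t2 : (B2.card : ℝ) * (2 * β * n) ≤ (γ * n / 8) * (2 * β * n) :=
        mul_le_mul_of_nonneg_right hB2card (by positivity)
      linarith [hEdge]
    have hgoal : (n:ℝ) * (γ * n / 8) + 2 * (γ ^ 2 * (n:ℝ) ^ 2) + (γ * n / 8) * (2 * β * n)
        ≤ γ * (n:ℝ) ^ 2 := by nlinarith [mul_pos (mul_pos hγ hn0) hn0, sq_nonneg (n:ℝ)]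
    exact le_trans hfinal hgoal
end

section
/- For every integer g ≥ 2 there is δ₀ > 0 such that for every δ ∈ (0, δ₀] and all sufficiently large n the following holds: if G is an n-vertex graph in which every vertex lies in at least δ·n^{g−1} copies of the complete graph K_g, then G contains a (δ, g)-absorber. -/
open Finset
open scoped Classical

/-- `𝒜` is a `(δ, g)`-absorber in the `n`-vertex graph `G`: a collection of `K_g`-copies
covering at most `δn` vertices such that every vertex of `G` has a neighbour in at least
`(δ²/(24g²)) n` cliques of the collection. -/
def IsAbsorber {n : ℕ} (G : SimpleGraph (Fin n)) (δ : ℝ) (g : ℕ)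
    (𝒜 : Finset (Finset (Fin n))) : Prop :=
  (∀ c ∈ 𝒜, G.IsNClique g c) ∧
  (((𝒜.biUnion id).card : ℝ) ≤ δ * n) ∧
  (∀ x : Fin n, δ ^ 2 / (24 * (g : ℝ) ^ 2) * n ≤
    (((𝒜.filter fun c => ∃ y ∈ c, G.Adj x y).card : ℝ)))

/-- Cliques through a vertex inject into (g-1)-subsets of its neighbourhood. -/
lemma cliques_through_card_le {n : ℕ} (G : SimpleGraph (Fin n)) (g : ℕ) (x : Fin n) :
    ((univ.filter fun c : Finset (Fin n) => G.IsNClique g c ∧ x ∈ c)).card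
      ≤ (G.neighborFinset x).card ^ (g - 1) := by
  have h1 : ((univ.filter fun c : Finset (Fin n) => G.IsNClique g c ∧ x ∈ c)).card
      ≤ ((G.neighborFinset x).powersetCard (g - 1)).card := by
    apply Finset.card_le_card_of_injOn (fun c => c.erase x)
    · intro c hc
      simp only [mem_coe, mem_filter, mem_univ, true_and] at hc
      obtain ⟨hcl, hx⟩ := hc
      rw [mem_coe, Finset.mem_powersetCard]
      constructor
      · intro z hz
        rw [Finset.mem_erase] at hz
        rw [SimpleGraph.mem_neighborFinset]
        exact hcl.1 (Finset.mem_coe.mpr hx) (Finset.mem_coe.mpr hz.2) (Ne.symm hz.1)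
      · rw [Finset.card_erase_of_mem hx, hcl.2]
    · intro c1 h1 c2 h2 he
      simp only [Set.mem_setOf_eq, coe_filter, mem_univ, true_and] at h1 h2
      have e1 : insert x (c1.erase x) = c1 := Finset.insert_erase h1.2
      have e2 : insert x (c2.erase x) = c2 := Finset.insert_erase h2.2
      simp only at he
      rw [← e1, ← e2, he]
  calc _ ≤ _ := h1
  _ = (G.neighborFinset x).card.choose (g-1) := by rw [Finset.card_powersetCard]
  _ ≤ _ := Nat.choose_le_pow _ _

/-- Minimum degree from the clique hypothesis. -/
lemma min_degree_lemma {n g : ℕ} (hg : 2 ≤ g) {δ : ℝ} (hδ0 : 0 < δ) (hδ1 : δ ≤ 1)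
    (G : SimpleGraph (Fin n))
    (hyp : ∀ x : Fin n, δ * (n : ℝ) ^ (g - 1) ≤
      ((Finset.univ.filter fun c : Finset (Fin n) => G.IsNClique g c ∧ x ∈ c).card : ℝ)) :
    ∀ x : Fin n, δ * n ≤ ((G.neighborFinset x).card : ℝ) := by
  intro x
  by_contra hlt
  push_neg at hlt
  set d : ℝ := ((G.neighborFinset x).card : ℝ) with hd
  have h0 : (0:ℝ) ≤ d := by positivity
  have hg1 : g - 1 ≠ 0 := by omega
  have hkey : d ^ (g-1) < (δ * n) ^ (g-1) := by
    apply pow_lt_pow_left₀ hlt h0 hg1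
  have h2 : (((univ.filter fun c : Finset (Fin n) => G.IsNClique g c ∧ x ∈ c)).card : ℝ)
      ≤ d ^ (g-1) := by
    rw [hd]
    exact_mod_cast cliques_through_card_le G g x
  have h3 : (δ * n) ^ (g-1) = δ ^ (g-1) * (n:ℝ) ^ (g-1) := mul_pow _ _ _
  have h4 : δ ^ (g-1) ≤ δ := pow_le_of_le_one hδ0.le hδ1 hg1
  have h5 : (0:ℝ) ≤ (n:ℝ) ^ (g-1) := by positivity
  have h6 : δ ^ (g-1) * (n:ℝ)^(g-1) ≤ δ * (n:ℝ)^(g-1) := mul_le_mul_of_nonneg_right h4 h5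
  have := hyp x
  nlinarith

/-- Greedy total-domination covering lemma. -/
lemma greedy_cover {n : ℕ} (G : SimpleGraph (Fin n)) (F : Finset (Fin n)) (M : ℕ)
    (hdeg : ∀ x : Fin n, M ≤ ((G.neighborFinset x) \ F).card) :
    ∀ (t : ℕ) (U : Finset (Fin n)), U.card * (n - M) ^ t < n ^ t →
    ∃ D : Finset (Fin n), (∀ y ∈ D, y ∉ F) ∧ D.card ≤ t ∧
      ∀ x ∈ U, ∃ y ∈ D, G.Adj x y := by
  intro t
  induction t with
  | zero =>
    intro U hU
    simp only [pow_zero, mul_one, Nat.lt_one_iff] at hU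
    refine ⟨∅, by simp, by simp, ?_⟩
    intro x hx
    rw [card_eq_zero.mp hU] at hx
    simp at hx
  | succ t ih =>
    intro U hU
    rcases U.eq_empty_or_nonempty with rfl | hUne
    · exact ⟨∅, by simp, by simp, by simp⟩
    have hUc : 0 < U.card := card_pos.mpr hUne
    -- n - M < n hence M ≥ 1, n ≥ 1
    have hnM : n - M < n := by
      by_contra hc
      push_neg at hc
      have : n ^ (t+1) ≤ (n - M) ^ (t+1) := Nat.pow_le_pow_left hc _
      have : n ^ (t+1) ≤ U.card * (n - M) ^ (t+1) :=
        le_trans this (Nat.le_mul_of_pos_left _ hUc)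
      omega
    have hn1 : 1 ≤ n := by omega
    have hM1 : 1 ≤ M := by omega
    -- double counting
    have swap : ∑ y ∈ univ \ F, ((G.neighborFinset y ∩ U)).card
        = ∑ x ∈ U, ((G.neighborFinset x \ F)).card := by
      have l1 : ∀ y : Fin n, (G.neighborFinset y ∩ U).card
          = ∑ x ∈ U, if G.Adj y x then 1 else 0 := by
        intro y
        rw [inter_comm, ← filter_mem_eq_inter, card_filter]
        refine Finset.sum_congr rfl fun x _ => ?_
        congr 1
        simp [SimpleGraph.mem_neighborFinset]
      have l2 : ∀ x : Fin n, (G.neighborFinset x \ F).card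
          = ∑ y ∈ univ \ F, if G.Adj y x then 1 else 0 := by
        intro x
        have e : G.neighborFinset x \ F = (univ \ F).filter (fun y => G.Adj y x) := by
          ext y
          simp only [mem_sdiff, SimpleGraph.mem_neighborFinset, mem_filter, mem_univ, true_and]
          rw [SimpleGraph.adj_comm]
          tauto
        rw [e, card_filter]
      simp only [l1, l2]
      exact Finset.sum_comm
    have total : U.card * M ≤ ∑ y ∈ univ \ F, (G.neighborFinset y ∩ U).card := by
      rw [swap]
      calc U.card * M = ∑ _x ∈ U, M := by rw [Finset.sum_const, smul_eq_mul]
      _ ≤ _ := Finset.sum_le_sum fun x _ => hdeg x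
    have hpos : 0 < U.card * M := Nat.mul_pos hUc hM1
    have hne : (univ \ F : Finset (Fin n)).Nonempty := by
      by_contra hc
      rw [not_nonempty_iff_eq_empty] at hc
      rw [hc, Finset.sum_empty] at total
      omega
    have hy : ∃ y ∈ univ \ F, U.card * M ≤ n * (G.neighborFinset y ∩ U).card := by
      by_contra hcon
      push_neg at hcon
      have hlt2 : ∑ y ∈ univ \ F, n * (G.neighborFinset y ∩ U).card
          < ∑ _y ∈ univ \ F, U.card * M :=
        Finset.sum_lt_sum_of_nonempty hne hcon
      rw [← Finset.mul_sum, Finset.sum_const, smul_eq_mul] at hlt2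
      have h1 : n * (U.card * M) ≤ n * ∑ y ∈ univ \ F, (G.neighborFinset y ∩ U).card :=
        Nat.mul_le_mul_left n total
      have h2 : (univ \ F : Finset (Fin n)).card ≤ n := by
        calc (univ \ F : Finset (Fin n)).card ≤ (univ : Finset (Fin n)).card :=
          card_le_card (sdiff_subset)
        _ = n := by simp
      have h3 : (univ \ F : Finset (Fin n)).card * (U.card * M) ≤ n * (U.card * M) :=
        Nat.mul_le_mul_right _ h2
      have := lt_of_le_of_lt h1 hlt2
      have := lt_of_lt_of_le this h3
      exact lt_irrefl _ this
    obtain ⟨y, hyF, hymin⟩ := hy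
    set U' := U \ G.neighborFinset y with hU'
    have e1 : U'.card + (U ∩ G.neighborFinset y).card = U.card :=
      card_sdiff_add_card_inter _ _
    have hyc : U.card * M ≤ n * (U ∩ G.neighborFinset y).card := by
      rwa [inter_comm]
    have key : n * U'.card ≤ U.card * (n - M) := by
      have k1 : n * U'.card + n * (U ∩ G.neighborFinset y).card = n * U.card := by
        rw [← Nat.mul_add, e1]
      have k3 : n * U'.card = n * U.card - n * (U ∩ G.neighborFinset y).card :=
        Nat.eq_sub_of_add_eq k1
      have k2 : U.card * (n - M) = n * U.card - M * U.card := by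
        rw [mul_comm, tsub_mul]
      rw [k3, k2]
      apply Nat.sub_le_sub_left
      calc M * U.card = U.card * M := mul_comm _ _
      _ ≤ n * (U ∩ G.neighborFinset y).card := hyc
    have m1 : n * (U'.card * (n - M) ^ t) < n * n ^ t := by
      calc n * (U'.card * (n - M) ^ t) = (n * U'.card) * (n - M) ^ t := by ring
      _ ≤ (U.card * (n - M)) * (n - M) ^ t := Nat.mul_le_mul_right _ key
      _ = U.card * (n - M) ^ (t + 1) := by ring
      _ < n ^ (t + 1) := hU
      _ = n * n ^ t := by ring
    have hUfin : U'.card * (n - M) ^ t < n ^ t := Nat.lt_of_mul_lt_mul_left m1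
    obtain ⟨D', hD'F, hD'c, hD'dom⟩ := ih U' hUfin
    refine ⟨insert y D', ?_, ?_, ?_⟩
    · intro z hz
      rcases mem_insert.mp hz with rfl | hz
      · simpa using (mem_sdiff.mp hyF).2
      · exact hD'F z hz
    · exact (card_insert_le _ _).trans (by omega)
    · intro x hx
      by_cases hxy : x ∈ G.neighborFinset y
      · refine ⟨y, mem_insert_self _ _, ?_⟩
        rw [SimpleGraph.mem_neighborFinset, SimpleGraph.adj_comm] at hxy
        exact hxy
      · obtain ⟨z, hzD, hadj⟩ := hD'dom x (mem_sdiff.mpr ⟨hx, hxy⟩)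
        exact ⟨z, mem_insert_of_mem hzD, hadj⟩

/-- Deterministic densification: a k-uniform family of density c (w.r.t. falling factorial)
has an m-subset retaining density c. -/
lemma dense_spot {V : Type*} [Fintype V] [DecidableEq V] (k : ℕ) (c : ℝ) (hc : 0 ≤ c) :
    ∀ N : ℕ, ∀ s : Finset V, s.card = N → ∀ ℒ : Finset (Finset V),
      (∀ B ∈ ℒ, B ⊆ s ∧ B.card = k) → ∀ m : ℕ, k ≤ m → m ≤ N →
      c * ∏ i ∈ range k, ((N : ℝ) - i) ≤ (ℒ.card : ℝ) →
      ∃ A, A ⊆ s ∧ A.card = m ∧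
        c * ∏ i ∈ range k, ((m : ℝ) - i) ≤ (((ℒ.filter fun B => B ⊆ A).card : ℝ)) := by
  intro N
  induction N using Nat.strong_induction_on with
  | _ N ih =>
    intro s hs ℒ hℒ m hkm hmN hcount
    rcases eq_or_lt_of_le hmN with heq | hlt
    · refine ⟨s, Finset.Subset.refl s, by rw [hs, heq], ?_⟩
      rw [filter_true_of_mem (fun B hB => (hℒ B hB).1), heq]
      exact hcount
    · have hN1 : 1 ≤ N := by omega
      have hsne : s.Nonempty := by rw [← card_pos, hs]; omega
      have hsum : ∑ v ∈ s, (ℒ.filter fun B => v ∈ B).card = k * ℒ.card := by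
        have l1 : ∀ v : V, (ℒ.filter fun B => v ∈ B).card
            = ∑ B ∈ ℒ, if v ∈ B then 1 else 0 := fun v => card_filter _ _
        simp only [l1]
        rw [Finset.sum_comm]
        have l3 : ∀ B ∈ ℒ, (∑ v ∈ s, if v ∈ B then 1 else 0) = k := by
          intro B hB
          rw [← card_filter, filter_mem_eq_inter, inter_eq_right.mpr (hℒ B hB).1, (hℒ B hB).2]
        rw [Finset.sum_congr rfl l3, Finset.sum_const, smul_eq_mul, mul_comm]
      have hv : ∃ v ∈ s, N * (ℒ.filter fun B => v ∈ B).card ≤ k * ℒ.card := by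
        by_contra hcon
        push_neg at hcon
        have hlt2 : ∑ _v ∈ s, k * ℒ.card < ∑ v ∈ s, N * (ℒ.filter fun B => v ∈ B).card :=
          Finset.sum_lt_sum_of_nonempty hsne hcon
        rw [Finset.sum_const, smul_eq_mul, hs, ← Finset.mul_sum, hsum, mul_left_comm] at hlt2
        exact lt_irrefl _ hlt2
      obtain ⟨v, hvs, hvmin⟩ := hv
      set ℒ' := ℒ.filter fun B => v ∉ B with hℒ'def
      have hcnt : (ℒ.filter fun B => v ∈ B).card + ℒ'.card = ℒ.card := by
        rw [hℒ'def]
        exact card_filter_add_card_filter_not _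
      have hkN : k ≤ N := le_trans hkm hmN
      -- (N - k) * |ℒ| ≤ N * |ℒ'| over ℕ
      have hnat : (N - k) * ℒ.card ≤ N * ℒ'.card := by
        have k1 : N * (ℒ.filter fun B => v ∈ B).card + N * ℒ'.card = N * ℒ.card := by
          rw [← Nat.mul_add, hcnt]
        have k2 : N * ℒ'.card = N * ℒ.card - N * (ℒ.filter fun B => v ∈ B).card := by omega
        rw [k2, tsub_mul]
        exact Nat.sub_le_sub_left hvmin _
      have hreal : ((N : ℝ) - k) * ℒ.card ≤ (N : ℝ) * ℒ'.card := by
        have := hnat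
        have hcast : (((N - k) * ℒ.card : ℕ) : ℝ) ≤ ((N * ℒ'.card : ℕ) : ℝ) := by
          exact_mod_cast this
        push_cast [Nat.cast_sub hkN] at hcast
        exact hcast
      -- product identity
      have hid : (∏ i ∈ range k, (((N : ℝ) - 1) - i)) * N
          = (∏ i ∈ range k, ((N : ℝ) - i)) * ((N : ℝ) - k) := by
        have l1 : (∏ i ∈ range (k+1), ((N : ℝ) - i))
            = (∏ i ∈ range k, ((N : ℝ) - i)) * ((N : ℝ) - k) := by
          rw [prod_range_succ]
        have l2 : (∏ i ∈ range (k+1), ((N : ℝ) - i))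
            = (∏ i ∈ range k, (((N : ℝ) - 1) - i)) * ((N : ℝ) - 0) := by
          rw [prod_range_succ']
          congr 1
          · exact Finset.prod_congr rfl fun i _ => by push_cast; ring
          · norm_num
        rw [← l1, l2]
        push_cast
        ring
      have hinv : c * ∏ i ∈ range k, (((N - 1 : ℕ) : ℝ) - i) ≤ (ℒ'.card : ℝ) := by
        have hNpos : (0 : ℝ) < N := by exact_mod_cast hN1
        rw [← mul_le_mul_iff_of_pos_right hNpos]
        have hcastN1 : ((N - 1 : ℕ) : ℝ) = (N : ℝ) - 1 := by
          push_cast [Nat.cast_sub hN1]; ring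
        calc c * (∏ i ∈ range k, (((N - 1 : ℕ) : ℝ) - i)) * N
            = c * ((∏ i ∈ range k, (((N : ℝ) - 1) - i)) * N) := by rw [hcastN1]; ring
          _ = c * ((∏ i ∈ range k, ((N : ℝ) - i)) * ((N : ℝ) - k)) := by rw [hid]
          _ = (c * ∏ i ∈ range k, ((N : ℝ) - i)) * ((N : ℝ) - k) := by ring
          _ ≤ (ℒ.card : ℝ) * ((N : ℝ) - k) := by
              apply mul_le_mul_of_nonneg_right hcount
              have : (k : ℝ) ≤ N := by exact_mod_cast hkN
              linarith
          _ = ((N : ℝ) - k) * ℒ.card := by ring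
          _ ≤ (N : ℝ) * ℒ'.card := hreal
          _ = (ℒ'.card : ℝ) * N := by ring
      have hsub : ∀ B ∈ ℒ', B ⊆ s.erase v ∧ B.card = k := by
        intro B hB
        rw [hℒ'def, mem_filter] at hB
        exact ⟨Finset.subset_erase.mpr ⟨(hℒ B hB.1).1, hB.2⟩, (hℒ B hB.1).2⟩
      obtain ⟨A, hAs, hAc, hAb⟩ := ih (N - 1) (by omega) (s.erase v)
        (by rw [card_erase_of_mem hvs, hs]) ℒ' hsub m hkm (by omega) hinv
      refine ⟨A, hAs.trans (erase_subset _ _), hAc, le_trans hAb ?_⟩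
      have : (ℒ'.filter fun B => B ⊆ A) ⊆ (ℒ.filter fun B => B ⊆ A) :=
        filter_subset_filter _ (filter_subset _ _)
      exact_mod_cast card_le_card this

/-- The greedy covering terminates within `⌈1/μ⌉ * (log₂ n + 1)` steps. -/
lemma step_bound {n M : ℕ} {μ : ℝ} (hn : 1 ≤ n) (hμ0 : 0 < μ) (hμ1 : μ ≤ 1)
    (hM : μ * n ≤ M) (hMn : M ≤ n) :
    n * (n - M) ^ (⌈1/μ⌉₊ * (Nat.log 2 n + 1)) < n ^ (⌈1/μ⌉₊ * (Nat.log 2 n + 1)) := by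
  set a : ℕ := ⌈1/μ⌉₊ with ha
  set b : ℕ := Nat.log 2 n + 1 with hb
  have hn0 : (0:ℝ) < n := by exact_mod_cast hn
  set q : ℝ := ((n:ℝ) - M)/n with hq
  have hq0 : 0 ≤ q := by
    apply div_nonneg _ hn0.le
    have : (M:ℝ) ≤ n := by exact_mod_cast hMn
    linarith
  have hq1 : q ≤ 1 - μ := by
    rw [hq, div_le_iff₀ hn0]
    nlinarith
  have h1μ : (0:ℝ) ≤ 1 - μ := by linarith
  have h2 : (1-μ)^a ≤ 1/2 := by
    have haμ : 1 ≤ (a:ℝ) * μ := by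
      have h := Nat.le_ceil (1/μ)
      rw [← ha] at h
      calc (1:ℝ) = (1/μ) * μ := by field_simp
      _ ≤ (a:ℝ) * μ := by apply mul_le_mul_of_nonneg_right h hμ0.le
    have hb1 : 1 + (a:ℝ)*μ ≤ (1+μ)^a := by
      have := one_add_mul_le_pow (a := μ) (by linarith) a
      calc 1 + (a:ℝ)*μ = 1 + (a:ℕ)*μ := by norm_num
      _ ≤ (1+μ)^a := this
    have hpos : (0:ℝ) < (1+μ)^a := by positivity
    have hle1 : (1-μ)^a * (1+μ)^a ≤ 1 := by
      rw [← mul_pow]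
      apply pow_le_one₀ (by nlinarith) (by nlinarith)
    have e2 : (1-μ)^a ≤ 1 / (1+μ)^a := by
      rw [le_div_iff₀ hpos]; exact hle1
    have e3 : 1/(1+μ)^a ≤ 1/(1+(a:ℝ)*μ) := by
      apply one_div_le_one_div_of_le (by linarith) hb1
    have e4 : 1/(1+(a:ℝ)*μ) ≤ 1/2 := by
      apply one_div_le_one_div_of_le (by norm_num) (by linarith)
    linarith
  have h3 : ((1:ℝ)/2)^b < 1/n := by
    rw [div_pow, one_pow, div_lt_div_iff₀ (by positivity) hn0]
    have hlog := Nat.lt_pow_succ_log_self (by norm_num : 1 < 2) n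
    have : (n:ℝ) < (2:ℝ)^b := by
      rw [hb]
      exact_mod_cast hlog
    nlinarith [pow_pos (by norm_num : (0:ℝ) < 2) b]
  have hA : q^(a*b) < 1/n := by
    calc q^(a*b) ≤ (1-μ)^(a*b) := pow_le_pow_left₀ hq0 hq1 _
    _ = ((1-μ)^a)^b := by rw [pow_mul]
    _ ≤ (1/2)^b := pow_le_pow_left₀ (by positivity) h2 b
    _ < 1/n := h3
  have main : (n:ℝ) * ((n:ℝ) - M)^(a*b) < (n:ℝ)^(a*b) := by
    have expand : ((n:ℝ) - M) = q * n := by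
      rw [hq]; field_simp
    rw [expand, mul_pow]
    have s1 : (n:ℝ) * (q ^ (a*b) * (n:ℝ)^(a*b)) < (n:ℝ) * ((1/(n:ℝ)) * (n:ℝ)^(a*b)) := by
      apply mul_lt_mul_of_pos_left _ hn0
      exact mul_lt_mul_of_pos_right hA (by positivity)
    have s2 : (n:ℝ) * ((1/(n:ℝ)) * (n:ℝ)^(a*b)) = (n:ℝ)^(a*b) := by field_simp
    linarith
  have hcast : (((n - M : ℕ)):ℝ) = (n:ℝ) - M := by
    push_cast [Nat.cast_sub hMn]; ring
  have final : ((n * (n-M)^(a*b) : ℕ) : ℝ) < ((n^(a*b) : ℕ) : ℝ) := by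
    push_cast [hcast]
    exact main
  exact_mod_cast final

lemma natlog_le {n : ℕ} (hn : 2 ≤ n) : ((Nat.log 2 n : ℝ) + 1) ≤ 2 * (Real.log n + 1) := by
  have h1 : ((2:ℕ):ℝ) ^ (Nat.log 2 n) ≤ (n:ℝ) := by
    exact_mod_cast Nat.pow_log_le_self 2 (by omega)
  have h2 : (Nat.log 2 n : ℝ) * Real.log 2 ≤ Real.log n := by
    calc (Nat.log 2 n : ℝ) * Real.log 2 = Real.log ((2:ℝ)^(Nat.log 2 n)) := by
          rw [Real.log_pow]
    _ ≤ Real.log n := Real.log_le_log (by positivity) (by exact_mod_cast h1)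
  have hl2 : (0.5:ℝ) ≤ Real.log 2 := by
    have := Real.log_two_gt_d9
    linarith
  have hpos : (0:ℝ) ≤ (Nat.log 2 n : ℝ) := by positivity
  have hlog : (0:ℝ) ≤ Real.log n := Real.log_nonneg (by exact_mod_cast Nat.one_le_iff_ne_zero.mpr (by omega))
  nlinarith

/-- Asymptotic choice of n₀. -/
lemma eventually_bound (C c : ℝ) (hC : 0 < C) (hc : 0 < c) :
    ∃ n₀ : ℕ, ∀ n : ℕ, n₀ ≤ n → C * (Real.log n + 1) * ((n:ℝ) ^ ((1:ℝ)/2) + 1) ≤ c * n := by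
  have h₁ : ∀ᶠ x : ℝ in Filter.atTop, Real.log x + 1 ≤ x ^ ((1:ℝ)/4) := by
    have hlo := isLittleO_log_rpow_atTop (by norm_num : (0:ℝ) < 1/4)
    have h2 := hlo.bound (by norm_num : (0:ℝ) < 1/2)
    have h3 : ∀ᶠ x : ℝ in Filter.atTop, (2:ℝ) ≤ x ^ ((1:ℝ)/4) :=
      (tendsto_rpow_atTop (by norm_num : (0:ℝ) < 1/4)).eventually_ge_atTop 2
    filter_upwards [h2, h3, Filter.eventually_ge_atTop (0:ℝ)] with x hx2 hx3 hx0
    have hxp : (0:ℝ) ≤ x ^ ((1:ℝ)/4) := Real.rpow_nonneg hx0 _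
    have habs : |Real.log x| ≤ 1/2 * |x ^ ((1:ℝ)/4)| := by
      simpa [Real.norm_eq_abs] using hx2
    rw [abs_of_nonneg hxp] at habs
    have : Real.log x ≤ 1/2 * x ^ ((1:ℝ)/4) := (le_abs_self _).trans habs
    linarith
  have h₂ : ∀ᶠ x : ℝ in Filter.atTop, (x:ℝ) ^ ((1:ℝ)/2) + 1 ≤ 2 * x ^ ((1:ℝ)/2) := by
    filter_upwards [Filter.eventually_ge_atTop (1:ℝ)] with x hx
    have : (1:ℝ) ≤ x ^ ((1:ℝ)/2) := by
      calc (1:ℝ) = (1:ℝ) ^ ((1:ℝ)/2) := by rw [Real.one_rpow]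
      _ ≤ x ^ ((1:ℝ)/2) := Real.rpow_le_rpow (by norm_num) hx (by norm_num)
    linarith
  have h₃ : ∀ᶠ x : ℝ in Filter.atTop, 2 * C * x ^ ((3:ℝ)/4) ≤ c * x := by
    have h4 : ∀ᶠ x : ℝ in Filter.atTop, (2*C/c:ℝ) ≤ x ^ ((1:ℝ)/4) :=
      (tendsto_rpow_atTop (by norm_num : (0:ℝ) < 1/4)).eventually_ge_atTop _
    filter_upwards [h4, Filter.eventually_gt_atTop (0:ℝ)] with x hx hx0
    have e : x ^ ((3:ℝ)/4) * x ^ ((1:ℝ)/4) = x := by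
      rw [← Real.rpow_add hx0]
      norm_num
    have hxp : (0:ℝ) ≤ x ^ ((3:ℝ)/4) := Real.rpow_nonneg hx0.le _
    have h5 : 2*C ≤ c * x ^ ((1:ℝ)/4) := by
      rw [← div_le_iff₀' hc] at *
      linarith [hx]
    calc 2 * C * x ^ ((3:ℝ)/4) ≤ (c * x ^ ((1:ℝ)/4)) * x ^ ((3:ℝ)/4) :=
          mul_le_mul_of_nonneg_right h5 hxp
    _ = c * (x ^ ((3:ℝ)/4) * x ^ ((1:ℝ)/4)) := by ring
    _ = c * x := by rw [e]
  have hall : ∀ᶠ x : ℝ in Filter.atTop,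
      C * (Real.log x + 1) * (x ^ ((1:ℝ)/2) + 1) ≤ c * x := by
    filter_upwards [h₁, h₂, h₃, Filter.eventually_ge_atTop (1:ℝ)] with x e1 e2 e3 hx1
    have hx0 : (0:ℝ) < x := by linarith
    have p1 : (0:ℝ) ≤ Real.log x + 1 := by
      have := Real.log_nonneg hx1; linarith
    have p2 : (0:ℝ) ≤ x ^ ((1:ℝ)/2) + 1 := by positivity
    have k2 : x ^ ((1:ℝ)/4) * x ^ ((1:ℝ)/2) = x ^ ((3:ℝ)/4) := by
      rw [← Real.rpow_add hx0]; norm_num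
    have k1 : C * (Real.log x + 1) * (x ^ ((1:ℝ)/2) + 1)
        ≤ (C * x ^ ((1:ℝ)/4)) * (2 * x ^ ((1:ℝ)/2)) := by
      apply mul_le_mul (mul_le_mul le_rfl e1 p1 hC.le) e2 p2 (by positivity)
    calc C * (Real.log x + 1) * (x ^ ((1:ℝ)/2) + 1)
        ≤ (C * x ^ ((1:ℝ)/4)) * (2 * x ^ ((1:ℝ)/2)) := k1
    _ = 2 * C * (x ^ ((1:ℝ)/4) * x ^ ((1:ℝ)/2)) := by ring
    _ = 2 * C * x ^ ((3:ℝ)/4) := by rw [k2]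
    _ ≤ c * x := e3
  have hnat : ∀ᶠ m : ℕ in Filter.atTop,
      C * (Real.log m + 1) * ((m:ℝ) ^ ((1:ℝ)/2) + 1) ≤ c * m :=
    tendsto_natCast_atTop_atTop.eventually hall
  exact Filter.eventually_atTop.mp hnat

set_option maxHeartbeats 2000000 in
lemma absorber_big {g : ℕ} (hg3 : 3 ≤ g) {δ : ℝ} (hδ0 : 0 < δ) (hδ1 : δ ≤ 1) :
    ∃ n₀ : ℕ, ∀ n : ℕ, n₀ ≤ n → ∀ G : SimpleGraph (Fin n),
      (∀ x : Fin n, δ * (n : ℝ) ^ (g - 1) ≤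
        ((Finset.univ.filter fun c : Finset (Fin n) => G.IsNClique g c ∧ x ∈ c).card : ℝ)) →
      ∃ 𝒜 : Finset (Finset (Fin n)), IsAbsorber G δ g 𝒜 := by
  have hμ0 : (0:ℝ) < δ/2 := by linarith
  set a : ℕ := ⌈1/(δ/2)⌉₊ with ha
  clear_value a
  have ha1 : 0 < a := by rw [ha]; exact Nat.ceil_pos.mpr (by positivity)
  have hCpos : (0:ℝ) < 2*a*(g+2) := by positivity
  obtain ⟨n₁, hn₁⟩ := eventually_bound (2*a*(g+2)) δ hCpos hδ0
  refine ⟨max n₁ (max 2 ⌈1/δ⌉₊), ?_⟩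
  intro n hn G hyp
  have hn1' : n₁ ≤ n := le_trans (le_max_left _ _) hn
  have hn2 : 2 ≤ n := le_trans (le_trans (le_max_left _ _) (le_max_right _ _)) hn
  have hnceil : ⌈1/δ⌉₊ ≤ n := le_trans (le_trans (le_max_right _ _) (le_max_right _ _)) hn
  have hn0 : (0:ℝ) < n := by positivity
  have hδn1 : 1 ≤ δ * n := by
    have h1 : (1:ℝ)/δ ≤ (⌈1/δ⌉₊ : ℝ) := Nat.le_ceil _
    have h2 : ((⌈1/δ⌉₊:ℕ) : ℝ) ≤ (n:ℝ) := by exact_mod_cast hnceil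
    have := le_trans h1 h2
    rw [div_le_iff₀ hδ0] at this
    nlinarith
  have hdeg := min_degree_lemma (by omega) hδ0 hδ1 G hyp
  set b : ℕ := Nat.log 2 n + 1 with hbdef
  clear_value b
  set t : ℕ := a * b with htdef
  clear_value t
  have hb1 : 1 ≤ b := by rw [hbdef]; omega
  have ht1 : 1 ≤ t := by
    rw [htdef]
    exact Nat.one_le_iff_ne_zero.mpr (Nat.mul_ne_zero (by omega) (by omega))
  set M : ℕ := ⌈δ*n/2⌉₊ with hMdef
  clear_value M
  have hM_le : ∀ x : Fin n, M ≤ ((G.neighborFinset x) \ (∅:Finset (Fin n))).card := by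
    intro x
    rw [sdiff_empty, hMdef]
    have h2 : δ*n/2 ≤ ((G.neighborFinset x).card : ℝ) := by linarith [hdeg x]
    exact Nat.ceil_le.mpr h2
  have hstep : (univ : Finset (Fin n)).card * (n - M)^t < n^t := by
    rw [card_univ, Fintype.card_fin]
    have hs := step_bound (n := n) (M := M) (μ := δ/2) (by omega) hμ0 (by linarith)
      (by rw [hMdef]; calc δ/2 * n = δ*n/2 := by ring
          _ ≤ (⌈δ*n/2⌉₊ : ℝ) := Nat.le_ceil _)
      (by rw [hMdef]; apply Nat.ceil_le.mpr; nlinarith)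
    rwa [htdef, ha, hbdef]
  obtain ⟨D, hDF, hDcard, hDdom⟩ := greedy_cover G ∅ M hM_le t univ hstep
  -- gadget size
  set m : ℕ := g + ⌈(δ*n) ^ ((1:ℝ)/(g-1))⌉₊ with hmdef
  clear_value m
  have hgm : g ≤ m := by rw [hmdef]; omega
  -- the link families
  set ℒ : Fin n → Finset (Finset (Fin n)) := fun y =>
    univ.filter (fun B : Finset (Fin n) =>
      B ⊆ univ.erase y ∧ B.card = g-1 ∧ G.IsNClique g (insert y B)) with hℒdef
  have hℒcard : ∀ y : Fin n, δ * (n:ℝ)^(g-1) ≤ ((ℒ y).card : ℝ) := by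
    intro y
    refine le_trans (hyp y) ?_
    have hinj : (univ.filter fun c : Finset (Fin n) => G.IsNClique g c ∧ y ∈ c).card
        ≤ (ℒ y).card := by
      apply Finset.card_le_card_of_injOn (fun c => c.erase y)
      · intro c hc
        simp only [mem_coe, mem_filter, mem_univ, true_and] at hc
        rw [hℒdef]
        simp only [mem_coe, mem_filter, mem_univ, true_and]
        refine ⟨?_, ?_, ?_⟩
        · intro z hz
          rw [mem_erase] at hz ⊢
          exact ⟨hz.1, mem_univ z⟩
        · rw [card_erase_of_mem hc.2, hc.1.2]
        · rw [insert_erase hc.2]; exact hc.1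
      · intro c1 h1 c2 h2 he
        simp only [Set.mem_setOf_eq, coe_filter, mem_univ, true_and] at h1 h2
        simp only at he
        rw [← insert_erase h1.2, ← insert_erase h2.2, he]
    exact_mod_cast hinj
  -- size bound
  have hrpow : (δ*n) ^ ((1:ℝ)/(g-1)) ≤ (n:ℝ) ^ ((1:ℝ)/2) := by
    have hg1 : (2:ℝ) ≤ ((g:ℝ) - 1) := by
      have : (3:ℝ) ≤ (g:ℝ) := by exact_mod_cast hg3
      linarith
    have e1 : (δ*n) ^ ((1:ℝ)/(g-1)) ≤ (δ*n) ^ ((1:ℝ)/2) := by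
      apply Real.rpow_le_rpow_of_exponent_le hδn1
      rw [div_le_div_iff₀ (by linarith) (by norm_num)]
      linarith
    have e2 : (δ*n) ^ ((1:ℝ)/2) ≤ (n:ℝ) ^ ((1:ℝ)/2) := by
      apply Real.rpow_le_rpow (by positivity) (by nlinarith) (by norm_num)
    linarith
  have hmb : (m:ℝ) + 1 ≤ ((g:ℝ)+2) * ((n:ℝ) ^ ((1:ℝ)/2) + 1) := by
    have h1 : (⌈(δ*n) ^ ((1:ℝ)/(g-1))⌉₊ : ℝ) < (δ*n) ^ ((1:ℝ)/(g-1)) + 1 :=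
      Nat.ceil_lt_add_one (by positivity)
    have h2 : (m:ℝ) = (g:ℝ) + (⌈(δ*n) ^ ((1:ℝ)/(g-1))⌉₊ : ℝ) := by
      rw [hmdef]; push_cast; ring
    have hg0 : (3:ℝ) ≤ (g:ℝ) := by exact_mod_cast hg3
    have hs0 : (0:ℝ) ≤ (n:ℝ) ^ ((1:ℝ)/2) := by positivity
    nlinarith
  have htb : (t:ℝ) ≤ (a:ℝ) * (2 * (Real.log n + 1)) := by
    have h1 : (t:ℝ) = (a:ℝ) * (b:ℝ) := by rw [htdef]; push_cast; ring
    have h2 : (b:ℝ) = (Nat.log 2 n : ℝ) + 1 := by rw [hbdef]; push_cast; ring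
    have h3 := natlog_le hn2
    rw [h1, h2]
    have ha0 : (0:ℝ) ≤ a := by positivity
    exact mul_le_mul_of_nonneg_left h3 ha0
  have hbound : (t:ℝ) * ((m:ℝ)+1) ≤ δ * n := by
    have h0 : (0:ℝ) ≤ (m:ℝ) + 1 := by positivity
    have h1 : (t:ℝ) * ((m:ℝ)+1) ≤ ((a:ℝ) * (2*(Real.log n + 1))) * (((g:ℝ)+2) * ((n:ℝ)^((1:ℝ)/2)+1)) := by
      apply mul_le_mul htb hmb h0 (by positivity)
    have hlogpos : (0:ℝ) ≤ Real.log n + 1 := by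
      have : (0:ℝ) ≤ Real.log n := Real.log_nonneg (by exact_mod_cast (by omega : 1 ≤ n))
      linarith
    have h2 : ((a:ℝ) * (2*(Real.log n + 1))) * (((g:ℝ)+2) * ((n:ℝ)^((1:ℝ)/2)+1))
        = (2*a*((g:ℝ)+2)) * (Real.log n + 1) * ((n:ℝ)^((1:ℝ)/2)+1) := by ring
    have h3 := hn₁ n hn1'
    push_cast at h3
    rw [h2] at h1
    linarith
  have hmn : m ≤ n - 1 := by
    have ht1' : (1:ℝ) ≤ (t:ℝ) := by exact_mod_cast ht1
    have h0 : (0:ℝ) ≤ (m:ℝ) + 1 := by positivity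
    have h1 : (m:ℝ) + 1 ≤ δ * n := by
      have hmul := mul_le_mul_of_nonneg_right ht1' h0
      rw [one_mul] at hmul
      linarith
    have h2 : (m:ℝ) + 1 ≤ (n:ℝ) := by
      have hmul := mul_le_mul_of_nonneg_right hδ1 hn0.le
      rw [one_mul] at hmul
      linarith
    have : m + 1 ≤ n := by exact_mod_cast h2
    omega
  -- gadgets
  have gads : ∀ y : Fin n, ∃ A : Finset (Fin n), A ⊆ univ.erase y ∧ A.card = m ∧
      δ*(δ*n) ≤ (((ℒ y).filter fun B => B ⊆ A).card : ℝ) := by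
    intro y
    have hscard : (univ.erase y).card = n - 1 := by
      rw [card_erase_of_mem (mem_univ y), card_univ, Fintype.card_fin]
    have hprops : ∀ B ∈ ℒ y, B ⊆ univ.erase y ∧ B.card = g - 1 := by
      intro B hB
      rw [hℒdef] at hB
      simp only [mem_filter, mem_univ, true_and] at hB
      exact ⟨hB.1, hB.2.1⟩
    have hinit : δ * ∏ i ∈ range (g-1), (((n-1:ℕ) : ℝ) - i) ≤ ((ℒ y).card : ℝ) := by
      refine le_trans ?_ (hℒcard y)
      apply mul_le_mul_of_nonneg_left _ hδ0.le
      have hfac : ∀ i ∈ range (g-1), (0:ℝ) ≤ ((n-1:ℕ):ℝ) - i ∧ ((n-1:ℕ):ℝ) - i ≤ (n:ℝ) := by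
        intro i hi
        rw [mem_range] at hi
        have hi2 : (i:ℝ) ≤ (g:ℝ) - 2 := by
          have : i ≤ g - 2 := by omega
          have := (Nat.cast_le (α := ℝ)).mpr this
          calc (i:ℝ) ≤ ((g-2:ℕ):ℝ) := this
          _ = (g:ℝ) - 2 := by push_cast [Nat.cast_sub (by omega : 2 ≤ g)]; ring
        have hnm : ((n-1:ℕ):ℝ) = (n:ℝ) - 1 := by
          push_cast [Nat.cast_sub (by omega : 1 ≤ n)]; ring
        have hng : (g:ℝ) ≤ ((n:ℝ) - 1) := by
          have : g ≤ n - 1 := le_trans hgm hmn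
          have := (Nat.cast_le (α := ℝ)).mpr this
          calc (g:ℝ) ≤ ((n-1:ℕ):ℝ) := this
          _ = (n:ℝ) - 1 := hnm
        constructor
        · rw [hnm]; linarith
        · rw [hnm]; linarith
      calc ∏ i ∈ range (g-1), (((n-1:ℕ) : ℝ) - i)
          ≤ ∏ _i ∈ range (g-1), (n:ℝ) := by
            apply Finset.prod_le_prod
            · intro i hi; exact (hfac i hi).1
            · intro i hi; exact (hfac i hi).2
        _ = (n:ℝ) ^ (g-1) := by rw [prod_const, card_range]
    obtain ⟨A, hA1, hA2, hA3⟩ := dense_spot (g-1) δ hδ0.le (n-1) (univ.erase y) hscard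
      (ℒ y) hprops m (by omega) hmn hinit
    refine ⟨A, hA1, hA2, le_trans ?_ hA3⟩
    apply mul_le_mul_of_nonneg_left _ hδ0.le
    -- δ*n ≤ ∏ (m - i)
    have hfac : ∀ i ∈ range (g-1), (δ*n) ^ ((1:ℝ)/(g-1)) ≤ (m:ℝ) - i := by
      intro i hi
      rw [mem_range] at hi
      have hi2 : (i:ℝ) ≤ (g:ℝ) - 2 := by
        have : i ≤ g - 2 := by omega
        have := (Nat.cast_le (α := ℝ)).mpr this
        calc (i:ℝ) ≤ ((g-2:ℕ):ℝ) := this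
        _ = (g:ℝ) - 2 := by push_cast [Nat.cast_sub (by omega : 2 ≤ g)]; ring
      have h2 : (m:ℝ) = (g:ℝ) + (⌈(δ*n) ^ ((1:ℝ)/(g-1))⌉₊ : ℝ) := by
        rw [hmdef]; push_cast; ring
      have h3 : (δ*n) ^ ((1:ℝ)/(g-1)) ≤ (⌈(δ*n) ^ ((1:ℝ)/(g-1))⌉₊ : ℝ) := Nat.le_ceil _
      rw [h2]; linarith
    have hprod : ((δ*n) ^ ((1:ℝ)/(g-1))) ^ (g-1) ≤ ∏ i ∈ range (g-1), ((m:ℝ) - i) := by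
      calc ((δ*n) ^ ((1:ℝ)/(g-1))) ^ (g-1) = ∏ _i ∈ range (g-1), (δ*n) ^ ((1:ℝ)/(g-1)) := by
            rw [prod_const, card_range]
      _ ≤ _ := by
            apply Finset.prod_le_prod
            · intro i _; positivity
            · exact hfac
    have hpow : ((δ*n) ^ ((1:ℝ)/(g-1))) ^ (g-1) = δ*n := by
      rw [← Real.rpow_natCast ((δ*n) ^ ((1:ℝ)/(g-1))) (g-1), ← Real.rpow_mul (by positivity)]
      have hcast : ((g-1:ℕ):ℝ) = (g:ℝ) - 1 := by
        push_cast [Nat.cast_sub (by omega : 1 ≤ g)]; ring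
      rw [hcast]
      have hne : (g:ℝ) - 1 ≠ 0 := by
        have : (3:ℝ) ≤ (g:ℝ) := by exact_mod_cast hg3
        intro h; nlinarith
      rw [one_div, inv_mul_cancel₀ hne, Real.rpow_one]
    linarith
  choose A hA1 hA2 hA3 using gads
  set S := D.biUnion (fun y => insert y (A y)) with hSdef
  clear_value S
  have hScard : (S.card:ℝ) ≤ δ * n := by
    have h1 : S.card ≤ ∑ y ∈ D, (insert y (A y)).card := by
      rw [hSdef]; exact card_biUnion_le
    have h2 : ∑ y ∈ D, (insert y (A y)).card ≤ ∑ _y ∈ D, (m+1) := by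
      apply Finset.sum_le_sum
      intro y _
      calc (insert y (A y)).card ≤ (A y).card + 1 := card_insert_le _ _
      _ = m + 1 := by rw [hA2 y]
    have h3 : S.card ≤ D.card * (m+1) := by
      rw [Finset.sum_const, smul_eq_mul] at h2
      omega
    have h4 : (S.card : ℝ) ≤ (t:ℝ) * ((m:ℝ)+1) := by
      have : S.card ≤ t * (m+1) := le_trans h3 (Nat.mul_le_mul_right _ hDcard)
      calc (S.card:ℝ) ≤ ((t * (m+1) : ℕ):ℝ) := by exact_mod_cast this
      _ = (t:ℝ) * ((m:ℝ)+1) := by push_cast; ring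
    linarith
  refine ⟨univ.filter (fun c : Finset (Fin n) => G.IsNClique g c ∧ c ⊆ S), ?_, ?_, ?_⟩
  · intro c hc
    exact (mem_filter.mp hc).2.1
  · refine le_trans ?_ hScard
    have hsub : (univ.filter (fun c : Finset (Fin n) => G.IsNClique g c ∧ c ⊆ S)).biUnion id ⊆ S := by
      intro z hz
      rw [mem_biUnion] at hz
      obtain ⟨c, hc, hzc⟩ := hz
      exact (mem_filter.mp hc).2.2 hzc
    exact_mod_cast card_le_card hsub
  · intro x
    obtain ⟨y, hyD, hxy⟩ := hDdom x (mem_univ x)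
    have hτ : δ^2/(24*(g:ℝ)^2) * n ≤ δ*(δ*n) := by
      have hg24 : (1:ℝ) ≤ 24*(g:ℝ)^2 := by
        have : (3:ℝ) ≤ (g:ℝ) := by exact_mod_cast hg3
        nlinarith
      have h1 : δ^2/(24*(g:ℝ)^2) ≤ δ^2 := div_le_self (by positivity) hg24
      have h2 : δ^2/(24*(g:ℝ)^2) * n ≤ δ^2 * n := mul_le_mul_of_nonneg_right h1 hn0.le
      nlinarith
    refine le_trans hτ (le_trans (hA3 y) ?_)
    have hinj : ((ℒ y).filter fun B => B ⊆ A y).card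
        ≤ ((univ.filter (fun c : Finset (Fin n) => G.IsNClique g c ∧ c ⊆ S)).filter
            fun c => ∃ z ∈ c, G.Adj x z).card := by
      apply Finset.card_le_card_of_injOn (fun B => insert y B)
      · intro B hB
        rw [mem_coe, mem_filter] at hB
        obtain ⟨hBℒ, hBA⟩ := hB
        rw [hℒdef] at hBℒ
        simp only [mem_filter, mem_univ, true_and] at hBℒ
        obtain ⟨hBs, hBc, hBq⟩ := hBℒ
        simp only [mem_coe, mem_filter, mem_univ, true_and]
        refine ⟨⟨hBq, ?_⟩, ⟨y, mem_insert_self _ _, hxy⟩⟩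
        intro z hz
        have hsub : insert y B ⊆ insert y (A y) := insert_subset_insert _ hBA
        have hsub2 : insert y (A y) ⊆ S := by
          rw [hSdef]; exact subset_biUnion_of_mem (fun y => insert y (A y)) hyD
        exact hsub2 (hsub hz)
      · intro B1 h1 B2 h2 he
        simp only [mem_coe, mem_filter] at h1 h2
        have hy1 : y ∉ B1 := by
          intro hy
          have := h1.1
          rw [hℒdef] at this
          simp only [mem_filter, mem_univ, true_and] at this
          exact (mem_erase.mp (this.1 hy)).1 rfl
        have hy2 : y ∉ B2 := by
          intro hy
          have := h2.1
          rw [hℒdef] at this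
          simp only [mem_filter, mem_univ, true_and] at this
          exact (mem_erase.mp (this.1 hy)).1 rfl
        simp only at he
        rw [← erase_insert hy1, ← erase_insert hy2, he]
    exact_mod_cast hinj

set_option maxHeartbeats 2000000 in
lemma absorber_two {δ : ℝ} (hδ0 : 0 < δ) (hδ1 : δ ≤ 1) :
    ∃ n₀ : ℕ, ∀ n : ℕ, n₀ ≤ n → ∀ G : SimpleGraph (Fin n),
      (∀ x : Fin n, δ * (n : ℝ) ^ (2 - 1) ≤
        ((Finset.univ.filter fun c : Finset (Fin n) => G.IsNClique 2 c ∧ x ∈ c).card : ℝ)) →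
      ∃ 𝒜 : Finset (Finset (Fin n)), IsAbsorber G δ 2 𝒜 := by
  have hμ0 : (0:ℝ) < δ/2 := by linarith
  set a : ℕ := ⌈1/(δ/2)⌉₊ with ha
  clear_value a
  have ha1 : 0 < a := by rw [ha]; exact Nat.ceil_pos.mpr (by positivity)
  have hCpos : (0:ℝ) < 2*a*2 := by positivity
  obtain ⟨n₁, hn₁⟩ := eventually_bound (2*a*2) (δ/2) hCpos hμ0
  refine ⟨max n₁ (max 2 ⌈1/δ⌉₊), ?_⟩
  intro n hn G hyp
  have hn1' : n₁ ≤ n := le_trans (le_max_left _ _) hn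
  have hn2 : 2 ≤ n := le_trans (le_trans (le_max_left _ _) (le_max_right _ _)) hn
  have hn0 : (0:ℝ) < n := by positivity
  have hdeg := min_degree_lemma (le_refl 2) hδ0 hδ1 G hyp
  set b : ℕ := Nat.log 2 n + 1 with hbdef
  clear_value b
  set t : ℕ := a * b with htdef
  clear_value t
  have hb1 : 1 ≤ b := by rw [hbdef]; omega
  have ht1 : 1 ≤ t := by
    rw [htdef]
    exact Nat.one_le_iff_ne_zero.mpr (Nat.mul_ne_zero (by omega) (by omega))
  set M : ℕ := ⌈δ*n/2⌉₊ with hMdef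
  clear_value M
  set r : ℕ := ⌈δ * Real.sqrt n⌉₊ with hrdef
  clear_value r
  -- bounds
  have hsqrt : Real.sqrt (n:ℝ) = (n:ℝ) ^ ((1:ℝ)/2) := Real.sqrt_eq_rpow _
  have hrb : (r:ℝ) ≤ (n:ℝ)^((1:ℝ)/2) + 1 := by
    have h1 : (r:ℝ) < δ * Real.sqrt n + 1 := by
      rw [hrdef]; exact Nat.ceil_lt_add_one (by positivity)
    have h2 : δ * Real.sqrt n ≤ Real.sqrt n := by
      nlinarith [Real.sqrt_nonneg (n:ℝ)]
    rw [hsqrt] at h1 h2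
    linarith
  have htb : (t:ℝ) ≤ (a:ℝ) * (2 * (Real.log n + 1)) := by
    have h1 : (t:ℝ) = (a:ℝ) * (b:ℝ) := by rw [htdef]; push_cast; ring
    have h2 : (b:ℝ) = (Nat.log 2 n : ℝ) + 1 := by rw [hbdef]; push_cast; ring
    have h3 := natlog_le hn2
    rw [h1, h2]
    have ha0 : (0:ℝ) ≤ a := by positivity
    exact mul_le_mul_of_nonneg_left h3 ha0
  have hlogpos : (0:ℝ) ≤ Real.log n + 1 := by
    have : (0:ℝ) ≤ Real.log n := Real.log_nonneg (by exact_mod_cast (by omega : 1 ≤ n))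
    linarith
  have hbound : (r:ℝ) * t ≤ δ/2 * n := by
    have h1 : (r:ℝ) * t ≤ ((n:ℝ)^((1:ℝ)/2) + 1) * ((a:ℝ) * (2*(Real.log n + 1))) := by
      apply mul_le_mul hrb htb (by positivity) (by positivity)
    have h2 : ((n:ℝ)^((1:ℝ)/2) + 1) * ((a:ℝ) * (2*(Real.log n + 1)))
        ≤ (2*(a:ℝ)*2) * (Real.log n + 1) * ((n:ℝ)^((1:ℝ)/2)+1) := by
      have hp : (0:ℝ) ≤ ((n:ℝ)^((1:ℝ)/2) + 1) * (Real.log n + 1) := by positivity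
      nlinarith [mul_nonneg (by positivity : (0:ℝ) ≤ (a:ℝ)) hp]
    have h3 := hn₁ n hn1'
    linarith
  -- layered construction
  have layer : ∀ i : ℕ, (i:ℝ) * t ≤ δ/2 * n → ∃ T : Finset (Fin n),
      ((T.card:ℝ) ≤ (i:ℝ) * t ∧ ∀ x : Fin n, i ≤ (G.neighborFinset x ∩ T).card) := by
    intro i
    induction i with
    | zero =>
      intro _
      refine ⟨∅, by simp, fun x => by simp⟩
    | succ i ih =>
      intro hi
      have ht0 : (0:ℝ) ≤ t := by positivity
      have hcast : ((i+1:ℕ):ℝ) = (i:ℝ) + 1 := by push_cast; ring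
      rw [hcast] at hi
      have hi' : (i:ℝ)*t ≤ δ/2*n := by nlinarith
      obtain ⟨T, hT1, hT2⟩ := ih hi'
      have hM_le : ∀ x : Fin n, M ≤ ((G.neighborFinset x) \ T).card := by
        intro x
        have hsd : (G.neighborFinset x).card - T.card ≤ ((G.neighborFinset x) \ T).card :=
          le_card_sdiff _ _
        have hdx := hdeg x
        have hTle : (T.card:ℝ) ≤ δ/2*n - t := by nlinarith
        have ht1' : (1:ℝ) ≤ t := by exact_mod_cast ht1
        have hMr : (M:ℝ) ≤ δ*n/2 + 1 := by
          rw [hMdef]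
          have := Nat.ceil_lt_add_one (a := δ*n/2) (by positivity)
          linarith
        have hhalf : δ/2*(n:ℝ) = δ*n/2 := by ring
        have key : (M:ℝ) ≤ ((G.neighborFinset x).card:ℝ) - T.card := by
          rw [hhalf] at hTle
          linarith
        have hc2 : ((G.neighborFinset x).card:ℝ) - T.card
            ≤ (((G.neighborFinset x \ T).card:ℕ):ℝ) := by
          rcases le_total T.card (G.neighborFinset x).card with hle | hle
          · have e1 : (((G.neighborFinset x).card - T.card : ℕ):ℝ)
                = ((G.neighborFinset x).card:ℝ) - T.card := by
              push_cast [Nat.cast_sub hle]; ring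
            rw [← e1]
            exact_mod_cast hsd
          · have e2 : ((G.neighborFinset x).card:ℝ) ≤ (T.card:ℝ) := by exact_mod_cast hle
            have : (0:ℝ) ≤ (((G.neighborFinset x \ T).card:ℕ):ℝ) := by positivity
            linarith
        have : (M:ℝ) ≤ (((G.neighborFinset x \ T).card:ℕ):ℝ) := le_trans key hc2
        exact_mod_cast this
      have hstep : (univ : Finset (Fin n)).card * (n - M)^t < n^t := by
        rw [card_univ, Fintype.card_fin]
        have hs := step_bound (n := n) (M := M) (μ := δ/2) (by omega) hμ0 (by linarith)
          (by rw [hMdef]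
              calc δ/2 * n = δ*n/2 := by ring
              _ ≤ (⌈δ*n/2⌉₊ : ℝ) := Nat.le_ceil _)
          (by rw [hMdef]; apply Nat.ceil_le.mpr; nlinarith)
        rwa [htdef, ha, hbdef]
      obtain ⟨D, hDF, hDc, hDdom⟩ := greedy_cover G T M hM_le t univ hstep
      refine ⟨T ∪ D, ?_, ?_⟩
      · have hcu : (T ∪ D).card ≤ T.card + D.card := card_union_le _ _
        have hDc' : (D.card:ℝ) ≤ t := by exact_mod_cast hDc
        have : ((T ∪ D).card:ℝ) ≤ (T.card:ℝ) + D.card := by exact_mod_cast hcu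
        rw [hcast]
        nlinarith
      · intro x
        obtain ⟨y, hyD, hxy⟩ := hDdom x (mem_univ x)
        have hyT : y ∉ T := hDF y hyD
        have hins : insert y (G.neighborFinset x ∩ T) ⊆ G.neighborFinset x ∩ (T ∪ D) := by
          intro z hz
          rcases mem_insert.mp hz with rfl | hz
          · exact mem_inter.mpr ⟨(SimpleGraph.mem_neighborFinset _ _ _).mpr hxy, mem_union_right _ hyD⟩
          · have h := mem_inter.mp hz
            exact mem_inter.mpr ⟨h.1, mem_union_left _ h.2⟩
        have hcard : i + 1 ≤ (insert y (G.neighborFinset x ∩ T)).card := by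
          rw [card_insert_of_notMem (fun hc => hyT (mem_inter.mp hc).2)]
          exact Nat.succ_le_succ (hT2 x)
        exact le_trans hcard (card_le_card hins)
  obtain ⟨S, hS1, hS2⟩ := layer r hbound
  refine ⟨univ.filter (fun c : Finset (Fin n) => G.IsNClique 2 c ∧ c ⊆ S), ?_, ?_, ?_⟩
  · intro c hc
    exact (mem_filter.mp hc).2.1
  · have hsub : (univ.filter (fun c : Finset (Fin n) => G.IsNClique 2 c ∧ c ⊆ S)).biUnion id ⊆ S := by
      intro z hz
      rw [mem_biUnion] at hz
      obtain ⟨c, hc, hzc⟩ := hz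
      exact (mem_filter.mp hc).2.2 hzc
    have h1 : ((((univ.filter (fun c : Finset (Fin n) => G.IsNClique 2 c ∧ c ⊆ S)).biUnion id).card : ℕ):ℝ)
        ≤ (S.card:ℝ) := by exact_mod_cast card_le_card hsub
    nlinarith
  · intro x
    set Q := ((G.neighborFinset x ∩ S) ×ˢ S).filter (fun p => G.Adj p.1 p.2) with hQdef
    have hQcard : r * r ≤ Q.card := by
      have e1 : Q.card = ∑ y ∈ G.neighborFinset x ∩ S, (S.filter (fun z => G.Adj y z)).card := by
        rw [hQdef, card_filter, Finset.sum_product]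
        refine Finset.sum_congr rfl fun y _ => ?_
        rw [card_filter]
      have e2 : ∀ y ∈ G.neighborFinset x ∩ S, r ≤ (S.filter (fun z => G.Adj y z)).card := by
        intro y _
        have heq : G.neighborFinset y ∩ S = S.filter (fun z => G.Adj y z) := by
          ext z
          simp only [mem_inter, mem_filter, SimpleGraph.mem_neighborFinset]
          tauto
        rw [← heq]
        exact hS2 y
      calc r * r ≤ (G.neighborFinset x ∩ S).card * r := Nat.mul_le_mul_right r (hS2 x)
      _ = ∑ _y ∈ G.neighborFinset x ∩ S, r := by rw [Finset.sum_const, smul_eq_mul]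
      _ ≤ ∑ y ∈ G.neighborFinset x ∩ S, (S.filter (fun z => G.Adj y z)).card :=
          Finset.sum_le_sum e2
      _ = Q.card := e1.symm
    have hfib : ∀ e ∈ Q.image (fun p => ({p.1, p.2} : Finset (Fin n))),
        (Q.filter (fun p => ({p.1, p.2} : Finset (Fin n)) = e)).card ≤ 2 := by
      intro e he
      obtain ⟨q₀, hq₀Q, hq₀e⟩ := mem_image.mp he
      have hsubfib : Q.filter (fun p => ({p.1, p.2} : Finset (Fin n)) = e)
          ⊆ {(q₀.1, q₀.2), (q₀.2, q₀.1)} := by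
        intro q hq
        rw [mem_filter] at hq
        obtain ⟨hqQ, hqe⟩ := hq
        have hadj : G.Adj q.1 q.2 := by
          rw [hQdef] at hqQ
          exact (mem_filter.mp hqQ).2
        have hpair : ({q.1, q.2} : Finset (Fin n)) = {q₀.1, q₀.2} := by rw [hqe, ← hq₀e]
        have h1 : q.1 = q₀.1 ∨ q.1 = q₀.2 := by
          have hm : q.1 ∈ ({q₀.1, q₀.2} : Finset (Fin n)) := by
            rw [← hpair]; exact mem_insert_self _ _
          simpa using hm
        have h2 : q.2 = q₀.1 ∨ q.2 = q₀.2 := by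
          have hm : q.2 ∈ ({q₀.1, q₀.2} : Finset (Fin n)) := by
            rw [← hpair]; exact mem_insert_of_mem (mem_singleton_self _)
          simpa using hm
        have hne : q.1 ≠ q.2 := hadj.ne
        simp only [mem_insert, mem_singleton]
        rcases h1 with e1 | e1 <;> rcases h2 with e2 | e2
        · exact absurd (e1.trans e2.symm) hne
        · left; exact Prod.ext e1 e2
        · right; exact Prod.ext e1 e2
        · exact absurd (e1.trans e2.symm) hne
      calc (Q.filter (fun p => ({p.1, p.2} : Finset (Fin n)) = e)).card
          ≤ ({(q₀.1, q₀.2), (q₀.2, q₀.1)} : Finset (Fin n × Fin n)).card :=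
            card_le_card hsubfib
      _ ≤ 2 := by
          apply le_trans (card_insert_le _ _)
          simp
    have himg : Q.card ≤ 2 * (Q.image (fun p => ({p.1, p.2} : Finset (Fin n)))).card :=
      card_le_mul_card_image _ 2 hfib
    have hsubimg : Q.image (fun p => ({p.1, p.2} : Finset (Fin n)))
        ⊆ (univ.filter (fun c : Finset (Fin n) => G.IsNClique 2 c ∧ c ⊆ S)).filter
            (fun c => ∃ z ∈ c, G.Adj x z) := by
      intro e he
      obtain ⟨q, hqQ, rfl⟩ := mem_image.mp he
      rw [hQdef, mem_filter] at hqQ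
      obtain ⟨hqmem, hadj⟩ := hqQ
      rw [mem_product] at hqmem
      have hq1 : q.1 ∈ G.neighborFinset x ∩ S := hqmem.1
      have hq2S : q.2 ∈ S := hqmem.2
      simp only [mem_filter, mem_univ, true_and]
      refine ⟨⟨⟨?_, ?_⟩, ?_⟩, ⟨q.1, mem_insert_self _ _, ?_⟩⟩
      · rw [coe_insert, coe_singleton]
        exact SimpleGraph.isClique_pair.mpr (fun _ => hadj)
      · exact card_pair hadj.ne
      · intro z hz
        rcases mem_insert.mp hz with rfl | hz
        · exact (mem_inter.mp hq1).2
        · rw [mem_singleton] at hz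
          subst hz
          exact hq2S
      · exact (SimpleGraph.mem_neighborFinset G x q.1).mp (mem_inter.mp hq1).1
    have hchain : r * r ≤ 2 * ((univ.filter (fun c : Finset (Fin n) => G.IsNClique 2 c ∧ c ⊆ S)).filter
        (fun c => ∃ z ∈ c, G.Adj x z)).card := by
      refine le_trans hQcard (le_trans himg ?_)
      exact Nat.mul_le_mul_left 2 (card_le_card hsubimg)
    have hr2 : δ^2 * n ≤ (r:ℝ)*(r:ℝ) := by
      have h1 : δ * Real.sqrt n ≤ (r:ℝ) := by rw [hrdef]; exact Nat.le_ceil _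
      have h2 : (0:ℝ) ≤ δ * Real.sqrt n := by positivity
      have h3 := Real.sq_sqrt hn0.le
      nlinarith [Real.sqrt_nonneg (n:ℝ)]
    have hcastc : ((r*r:ℕ):ℝ) ≤ 2 * ((((univ.filter (fun c : Finset (Fin n) => G.IsNClique 2 c ∧ c ⊆ S)).filter
        (fun c => ∃ z ∈ c, G.Adj x z)).card : ℕ):ℝ) := by exact_mod_cast hchain
    push_cast at hcastc
    have hg2 : ((2:ℕ):ℝ) = 2 := by norm_num
    rw [hg2]
    nlinarith

/-- Lemma 7.2: if every vertex of `G` lies in at least `δ n^{g-1}` copies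
of `K_g`, then `G` contains a `(δ, g)`-absorber. -/
theorem statement12 (g : ℕ) (hg : 2 ≤ g) :
    ∃ δ₀ : ℝ, 0 < δ₀ ∧ ∀ δ : ℝ, 0 < δ → δ ≤ δ₀ →
      ∃ n₀ : ℕ, ∀ n : ℕ, n₀ ≤ n →
        ∀ G : SimpleGraph (Fin n),
          (∀ x : Fin n, δ * (n : ℝ) ^ (g - 1) ≤
            ((Finset.univ.filter fun c : Finset (Fin n) => G.IsNClique g c ∧ x ∈ c).card : ℝ)) →
          ∃ 𝒜 : Finset (Finset (Fin n)), IsAbsorber G δ g 𝒜 := by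
  refine ⟨1, one_pos, ?_⟩
  intro δ hδ0 hδ1
  rcases eq_or_lt_of_le hg with heq | hlt
  · subst heq
    exact absorber_two hδ0 hδ1
  · exact absorber_big (by omega) hδ0 hδ1
end

section
/- Let 1 ≤ t ≤ s be integers. The graph Q_{s,t} (with all vertex weights equal to 1) admits a K₂*-packing with residue 0 such that for each copy of K₂* in the packing, the vertex τ is mapped into the M-part of Q_{s,t}. -/
open Finset
open scoped Classical

/-- The graph `Q_{s,t}` on `L ⊕ M ⊕ N` where `|L| = s - t`, `|M| = |N| = t`: a complete
bipartite graph between `L` and `M` together with a perfect matching between `M` and `N`. -/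
def Qgraph (s t : ℕ) : SimpleGraph (Fin (s - t) ⊕ Fin t ⊕ Fin t) :=
  SimpleGraph.fromRel (fun x y =>
    (∃ a b, x = Sum.inl a ∧ y = Sum.inr (Sum.inl b)) ∨
    (∃ b, x = Sum.inr (Sum.inl b) ∧ y = Sum.inr (Sum.inr b)))

/-- Lemma 7.4: `Q_{s,t}` has a `K₂*`-packing with residue `0` such that the
vertex `τ` of each copy of `K₂*` is mapped into the `M`-part of `Q_{s,t}`. A copy of `K₂*` is
recorded as the ordered pair (image of `σ`, image of `τ`) of adjacent vertices; the weights
are `w(σ) = 1/(t(s+t))` and `w(τ) = 1/(s(s+t))`, and all vertices of `Q_{s,t}` have weight 1.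
Residue `0` means the total weight of the packing equals `|V(Q_{s,t})| = s + t`. -/
theorem statement14 (s t : ℕ) (ht : 1 ≤ t) (hts : t ≤ s) :
    ∃ (k : ℕ)
      (pairs : Fin k →
        (Fin (s - t) ⊕ Fin t ⊕ Fin t) × (Fin (s - t) ⊕ Fin t ⊕ Fin t)),
      (∀ i, (Qgraph s t).Adj (pairs i).1 (pairs i).2) ∧
      (∀ x : Fin (s - t) ⊕ Fin t ⊕ Fin t,
        (∑ i : Fin k,
          ((if (pairs i).1 = x then (1 : ℝ) / ((t : ℝ) * ((s : ℝ) + (t : ℝ))) else 0) +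
           (if (pairs i).2 = x then (1 : ℝ) / ((s : ℝ) * ((s : ℝ) + (t : ℝ))) else 0))) ≤ 1) ∧
      ((k : ℝ) * ((1 : ℝ) / ((t : ℝ) * ((s : ℝ) + (t : ℝ))) +
        (1 : ℝ) / ((s : ℝ) * ((s : ℝ) + (t : ℝ)))) = (s : ℝ) + (t : ℝ)) ∧
      (∀ i, ∃ b : Fin t, (pairs i).2 = Sum.inr (Sum.inl b)) := by
  have hs : 1 ≤ s := le_trans ht hts
  have hs0 : (s : ℝ) ≠ 0 := Nat.cast_ne_zero.2 (by omega)
  have ht0 : (t : ℝ) ≠ 0 := Nat.cast_ne_zero.2 (by omega)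
  have hst0 : (s : ℝ) + (t : ℝ) ≠ 0 := by positivity
  let ι := ((Fin (s - t) × Fin t) × Fin (s + t)) ⊕ (Fin t × Fin (t * (s + t)))
  let g : ι → (Fin (s - t) ⊕ Fin t ⊕ Fin t) × (Fin (s - t) ⊕ Fin t ⊕ Fin t) := fun x =>
    match x with
    | Sum.inl ((l, m), _) => (Sum.inl l, Sum.inr (Sum.inl m))
    | Sum.inr (b, _) => (Sum.inr (Sum.inr b), Sum.inr (Sum.inl b))
  let e := (Fintype.equivFin ι)
  have hcard : Fintype.card ι = (s - t) * t * (s + t) + t * (t * (s + t)) := by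
    simp [ι, Fintype.card_sum, Fintype.card_prod, Fintype.card_fin, mul_assoc]
  refine ⟨Fintype.card ι, g ∘ e.symm, ?_, ?_, ?_, ?_⟩
  · intro i
    rcases h : e.symm i with ⟨⟨l, m⟩, j⟩ | ⟨b, j⟩ <;>
      simp [g, h, Qgraph, SimpleGraph.fromRel_adj]
  · intro x
    have hsum : ∀ f : (Fin (s - t) ⊕ Fin t ⊕ Fin t) ×
        (Fin (s - t) ⊕ Fin t ⊕ Fin t) → ℝ,
        (∑ i : Fin (Fintype.card ι), f ((g ∘ e.symm) i)) = ∑ x : ι, f (g x) :=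
      fun f => Equiv.sum_comp e.symm (fun x => f (g x))
    rw [hsum (fun p => (if p.1 = x then (1 : ℝ) / ((t : ℝ) * ((s : ℝ) + (t : ℝ))) else 0) +
      (if p.2 = x then (1 : ℝ) / ((s : ℝ) * ((s : ℝ) + (t : ℝ))) else 0))]
    rw [Fintype.sum_sum_type]
    rcases x with l | m | n
    · rw [show (∑ a : (Fin (s - t) × Fin t) × Fin (s + t),
          ((if (g (Sum.inl a)).1 = Sum.inl l then (1 : ℝ) / ((t : ℝ) * ((s : ℝ) + (t : ℝ))) else 0) +
           (if (g (Sum.inl a)).2 = Sum.inl l then (1 : ℝ) / ((s : ℝ) * ((s : ℝ) + (t : ℝ))) else 0)))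
          = (t * (s + t) : ℕ) * ((1 : ℝ) / ((t : ℝ) * ((s : ℝ) + (t : ℝ)))) by
        simp [g, Fintype.sum_prod_type, Finset.sum_ite_eq', Finset.sum_const, Finset.card_univ,
          mul_ite, mul_zero, nsmul_eq_mul]
        dsimp +instances only
        simp [Finset.sum_const, Finset.card_univ, nsmul_eq_mul, mul_ite, mul_zero,
          Finset.sum_ite_eq']
        all_goals (push_cast; ring)]
      rw [show (∑ b : Fin t × Fin (t * (s + t)),
          ((if (g (Sum.inr b)).1 = Sum.inl l then (1 : ℝ) / ((t : ℝ) * ((s : ℝ) + (t : ℝ))) else 0) +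
           (if (g (Sum.inr b)).2 = Sum.inl l then (1 : ℝ) / ((s : ℝ) * ((s : ℝ) + (t : ℝ))) else 0)))
          = 0 by simp [g]]
      rw [add_zero]
      push_cast
      rw [mul_one_div, div_self (by positivity)]
    · rw [show (∑ a : (Fin (s - t) × Fin t) × Fin (s + t),
          ((if (g (Sum.inl a)).1 = Sum.inr (Sum.inl m) then (1 : ℝ) / ((t : ℝ) * ((s : ℝ) + (t : ℝ))) else 0) +
           (if (g (Sum.inl a)).2 = Sum.inr (Sum.inl m) then (1 : ℝ) / ((s : ℝ) * ((s : ℝ) + (t : ℝ))) else 0)))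
          = ((s - t) * (s + t) : ℕ) * ((1 : ℝ) / ((s : ℝ) * ((s : ℝ) + (t : ℝ)))) by
        simp [g, Fintype.sum_prod_type, Finset.sum_ite_eq', Finset.sum_const, Finset.card_univ,
          mul_ite, mul_zero, nsmul_eq_mul]
        dsimp +instances only
        simp [Finset.sum_const, Finset.card_univ, nsmul_eq_mul, mul_ite, mul_zero,
          Finset.sum_ite_eq']
        all_goals (push_cast; ring)]
      rw [show (∑ b : Fin t × Fin (t * (s + t)),
          ((if (g (Sum.inr b)).1 = Sum.inr (Sum.inl m) then (1 : ℝ) / ((t : ℝ) * ((s : ℝ) + (t : ℝ))) else 0) +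
           (if (g (Sum.inr b)).2 = Sum.inr (Sum.inl m) then (1 : ℝ) / ((s : ℝ) * ((s : ℝ) + (t : ℝ))) else 0)))
          = (t * (s + t) : ℕ) * ((1 : ℝ) / ((s : ℝ) * ((s : ℝ) + (t : ℝ)))) by
        simp [g, Fintype.sum_prod_type, Finset.sum_ite_eq', Finset.sum_const, Finset.card_univ,
          mul_ite, mul_zero, nsmul_eq_mul]
        dsimp +instances only
        simp [Finset.sum_const, Finset.card_univ, nsmul_eq_mul, mul_ite, mul_zero,
          Finset.sum_ite_eq']
        all_goals (push_cast; ring)]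
      push_cast [Nat.cast_sub hts]
      rw [show ((s : ℝ) - t) * (s + t) * (1 / (s * (s + t))) + t * (s + t) * (1 / (s * (s + t)))
          = (s * (s + t)) * (1 / (s * (s + t))) by ring,
        mul_one_div, div_self (by positivity)]
    · rw [show (∑ a : (Fin (s - t) × Fin t) × Fin (s + t),
          ((if (g (Sum.inl a)).1 = Sum.inr (Sum.inr n) then (1 : ℝ) / ((t : ℝ) * ((s : ℝ) + (t : ℝ))) else 0) +
           (if (g (Sum.inl a)).2 = Sum.inr (Sum.inr n) then (1 : ℝ) / ((s : ℝ) * ((s : ℝ) + (t : ℝ))) else 0)))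
          = 0 by simp [g]]
      rw [show (∑ b : Fin t × Fin (t * (s + t)),
          ((if (g (Sum.inr b)).1 = Sum.inr (Sum.inr n) then (1 : ℝ) / ((t : ℝ) * ((s : ℝ) + (t : ℝ))) else 0) +
           (if (g (Sum.inr b)).2 = Sum.inr (Sum.inr n) then (1 : ℝ) / ((s : ℝ) * ((s : ℝ) + (t : ℝ))) else 0)))
          = (t * (s + t) : ℕ) * ((1 : ℝ) / ((t : ℝ) * ((s : ℝ) + (t : ℝ)))) by
        simp [g, Fintype.sum_prod_type, Finset.sum_ite_eq', Finset.sum_const, Finset.card_univ,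
          mul_ite, mul_zero, nsmul_eq_mul]
        dsimp +instances only
        simp [Finset.sum_const, Finset.card_univ, nsmul_eq_mul, mul_ite, mul_zero,
          Finset.sum_ite_eq']
        all_goals (push_cast; ring)]
      rw [zero_add]
      push_cast
      rw [mul_one_div, div_self (by positivity)]
  · rw [hcard]
    push_cast [Nat.cast_sub hts]
    field_simp
    ring
  · intro i
    rcases h : e.symm i with ⟨⟨l, m⟩, j⟩ | ⟨b, j⟩
    · exact ⟨m, by simp [g, h]⟩
    · exact ⟨b, by simp [g, h]⟩
end

section
/- Let G be a connected n-vertex graph with minimum degree strictly greater than n/3 such that every vertex of G belongs to a triangle. Then for any two vertices u and v of G there is a trail from u to v of even length at most 8. -/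
open Finset
open scoped Classical

/-!
If two vertices were at distance at least `6`, the vertices at positions `0`, `3` and `6` of a
shortest path between them would be pairwise at distance at least `3`, so their closed
neighbourhoods would be disjoint, each with more than `n / 3` vertices; hence the diameter is at
most `5`. A shortest path of odd length becomes even by going once around a triangle through its
first vertex, which costs three more edges.
-/

namespace SimpleGraph

variable {V : Type*} {G : SimpleGraph V}

lemma Walk.dist_getVert_getVert_of_length_eq_dist {u v : V} {p : G.Walk u v}
    (hp : p.length = G.dist u v) {i j : ℕ} (hij : i ≤ j) (hj : j ≤ p.length) :
    G.dist (p.getVert i) (p.getVert j) = j - i := by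
  have hend : (p.drop i).getVert (j - i) = p.getVert j := by
    rw [Walk.drop_getVert, Nat.add_sub_cancel' hij]
  let q := ((p.drop i).take (j - i)).copy rfl hend
  have hsub : q.IsSubwalk p :=
    (((p.drop i).isSubwalk_take _).trans (p.isSubwalk_drop i)).copy rfl hend rfl rfl
  rw [← length_eq_dist_of_subwalk hp hsub]
  simp only [q, Walk.length_copy, Walk.take_length, Walk.drop_length]
  omega

lemma disjoint_insert_neighborFinset_of_two_lt_dist [Fintype V] [DecidableEq V]
    [DecidableRel G.Adj] {x y : V} (hxy : 2 < G.dist x y) :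
    Disjoint (insert x (G.neighborFinset x)) (insert y (G.neighborFinset y)) := by
  rw [Finset.disjoint_left]
  intro w hwx hwy
  have hx : G.edist x w ≤ 1 := by
    rw [edist_le_one_iff_adj_or_eq]
    simp only [Finset.mem_insert, mem_neighborFinset] at hwx
    tauto
  have hy : G.edist w y ≤ 1 := by
    rw [edist_comm, edist_le_one_iff_adj_or_eq]
    simp only [Finset.mem_insert, mem_neighborFinset] at hwy
    tauto
  have hedist : G.edist x y ≤ 2 :=
    G.edist_triangle.trans (by simpa [one_add_one_eq_two] using add_le_add hx hy)
  have hreach : G.Reachable x y :=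
    reachable_of_edist_ne_top (ne_top_of_le_ne_top (by simp) hedist)
  rw [← hreach.coe_dist_eq_edist] at hedist
  exact absurd (by exact_mod_cast hedist) hxy.not_ge

lemma degree_add_degree_add_degree_add_three_le_card [Fintype V] [DecidableEq V]
    [DecidableRel G.Adj] {x y z : V} (hxy : 2 < G.dist x y) (hxz : 2 < G.dist x z)
    (hyz : 2 < G.dist y z) :
    G.degree x + 1 + (G.degree y + 1) + (G.degree z + 1) ≤ Fintype.card V := by
  have hcard (w : V) : (insert w (G.neighborFinset w)).card = G.degree w + 1 :=
    Finset.card_insert_of_notMem (G.notMem_neighborFinset_self w)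
  rw [← hcard, ← hcard, ← hcard, ← Finset.card_union_of_disjoint
      (disjoint_insert_neighborFinset_of_two_lt_dist hxy),
    ← Finset.card_union_of_disjoint (Finset.disjoint_union_left.2
      ⟨disjoint_insert_neighborFinset_of_two_lt_dist hxz,
        disjoint_insert_neighborFinset_of_two_lt_dist hyz⟩)]
  exact Finset.card_le_univ _

lemma Connected.dist_le_five [Fintype V] [DecidableRel G.Adj] (hconn : G.Connected)
    (hdeg : ∀ v, Fintype.card V < 3 * (G.degree v + 1)) (u v : V) : G.dist u v ≤ 5 := by
  classical
  by_contra! hfar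
  obtain ⟨p, hp⟩ := hconn.exists_walk_length_eq_dist u v
  have hgeo {i j : ℕ} (hij : i ≤ j) (hj : j ≤ 6) :=
    p.dist_getVert_getVert_of_length_eq_dist hp hij (by omega)
  have hcount := degree_add_degree_add_degree_add_three_le_card (G := G)
    (x := p.getVert 0) (y := p.getVert 3) (z := p.getVert 6)
    (by rw [hgeo] <;> omega) (by rw [hgeo] <;> omega) (by rw [hgeo] <;> omega)
  have h0 := hdeg (p.getVert 0)
  have h3 := hdeg (p.getVert 3)
  have h6 := hdeg (p.getVert 6)
  omega

lemma Walk.exists_even_length_le_add {u v : V} (p : G.Walk u v) (c : G.Walk u u)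
    (hc : Odd c.length) : ∃ w : G.Walk u v, Even w.length ∧ w.length ≤ p.length + c.length := by
  rcases Nat.even_or_odd p.length with hp | hp
  · exact ⟨p, hp, Nat.le_add_right _ _⟩
  · exact ⟨c.append p, by simpa [add_comm] using hc.add_odd hp, by simp [add_comm]⟩

end SimpleGraph

lemma degR_eq_degree {V : Type*} (G : SimpleGraph V) (v : V) [Fintype (G.neighborSet v)] :
    degR G v = G.degree v := by
  rw [degR, Nat.card_eq_fintype_card, SimpleGraph.card_neighborSet_eq_degree]

/-- Lemma 9.2: in a connected `n`-vertex graph with minimum degree greater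
than `n/3` in which every vertex lies in a triangle, any two vertices are joined by a walk
("trail" in the paper: vertices may repeat) of even length at most 8. -/
theorem statement18 (n : ℕ) (G : SimpleGraph (Fin n)) (hconn : G.Connected)
    (hdeg : ∀ v, (n : ℝ) / 3 < (degR G v : ℝ))
    (htri : ∀ v, ∃ a b : Fin n, G.Adj v a ∧ G.Adj v b ∧ G.Adj a b) :
    ∀ u v : Fin n, ∃ w : G.Walk u v, Even w.length ∧ w.length ≤ 8 := by
  intro u v
  have hdeg' (x : Fin n) : Fintype.card (Fin n) < 3 * (G.degree x + 1) := by
    have hx := hdeg x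
    rw [degR_eq_degree] at hx
    rw [Fintype.card_fin]
    exact_mod_cast (by linarith : (n : ℝ) < 3 * (G.degree x + 1))
  obtain ⟨p, hp⟩ := hconn.exists_walk_length_eq_dist u v
  have hp5 : p.length ≤ 5 := hp ▸ hconn.dist_le_five hdeg' u v
  obtain ⟨a, b, hua, hub, hab⟩ := htri u
  let triangle : G.Walk u u := .cons hua (.cons hab (.cons hub.symm .nil))
  have htriangle : triangle.length = 3 := rfl
  obtain ⟨w, hw, hlen⟩ := p.exists_even_length_le_add triangle (htriangle ▸ odd_two_mul_add_one 1)
  exact ⟨w, hw, by omega⟩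
end
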